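/- arXiv:1804.06500 — 6 statements merged into one kernel-verified Lean document; each statement's English description precedes it below -/
import Mathlib

section
/- Let p,q ∈ [1,∞] be Hölder conjugates (1/p + 1/q = 1), let R > 0, and let Λ := {λ ∈ ℝ₊^m : ‖λ‖_p ≤ R}. Suppose μ is a probability distribution on Θ and ν is a probability distribution on Λ (with g₀,…,g_m integrable w.r.t. μ) such that sup_{λ* ∈ Λ} E_{θ∼μ}[ℒ(θ,λ*)] − inf_{θ* ∈ Θ} E_{λ∼ν}[ℒ(θ*,λ)] ≤ ε, i.e. (μ,ν) is an ε-approximate mixed Nash equilibrium of the Lagrangian game. Then: (i) E_{θ∼μ}[g₀(θ)] ≤ inf{g₀(θ*) : θ* ∈ Θ, g_i(θ*) ≤ 0 for all i ∈ {1,…,m}} + ε; and (ii) if λ̄ := E_{λ∼ν}[λ] satisfies ‖λ̄‖_p < R, then ‖(E_{θ∼μ}[g(θ)])₊‖_q ≤ ε/(R − ‖λ̄‖_p), where g(θ) := (g₁(θ),…,g_m(θ)) ∈ ℝ^m and (·)₊ takes coordinatewise positive parts. -/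
open MeasureTheory

/-- The `p`-norm of a vector in `Fin m → ℝ`, for `p ∈ [1,∞]` (an extended
nonnegative real).  For `p = ∞` it is the maximum absolute coordinate, and for
`p < ∞` it is `(∑ i, |x i| ^ p)^(1/p)`. -/
noncomputable def pNorm {m : ℕ} (p : ENNReal) (x : Fin m → ℝ) : ℝ :=
  if p = ⊤ then ⨆ i, |x i| else (∑ i, |x i| ^ p.toReal) ^ (1 / p.toReal)

/-!
Testing the equilibrium against the multiplier `0` gives near-optimality, because `λ̄ = E_ν[λ]` is
nonnegative and so its multiplier term is nonpositive at a feasible point. For near-feasibility,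
the equality case of Hölder's inequality gives `w ≥ 0` with `‖w‖_p ≤ 1` and
`‖(E_μ g)₊‖_q ≤ ⟪w, E_μ g⟫`. The multiplier `λ̄ + (R - ‖λ̄‖_p) w` still lies in `Λ`; testing the
equilibrium against it and against a point `θ₀` that does at least as well as `μ` against `λ̄`
leaves `(R - ‖λ̄‖_p) ⟪w, E_μ g⟫ ≤ ε`.
-/

open scoped ENNReal

section pNorm

variable {m : ℕ} {p : ℝ≥0∞}

lemma pNorm_top (x : Fin m → ℝ) : pNorm ⊤ x = ⨆ i, |x i| := if_pos rfl

lemma pNorm_of_ne_top (hp : p ≠ ⊤) (x : Fin m → ℝ) :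
    pNorm p x = (∑ i, |x i| ^ p.toReal) ^ (1 / p.toReal) := if_neg hp

lemma pNorm_one (x : Fin m → ℝ) : pNorm 1 x = ∑ i, |x i| := by
  simp [pNorm_of_ne_top]

lemma pNorm_rpow_toReal (hp₀ : p ≠ 0) (hp : p ≠ ⊤) (x : Fin m → ℝ) :
    pNorm p x ^ p.toReal = ∑ i, |x i| ^ p.toReal := by
  rw [pNorm_of_ne_top hp, one_div, Real.rpow_inv_rpow (by positivity)
    (ENNReal.toReal_ne_zero.mpr ⟨hp₀, hp⟩)]

lemma pNorm_eq_norm_toLp [Fact (1 ≤ p)] (x : Fin m → ℝ) :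
    pNorm p x = ‖WithLp.toLp p x‖ := by
  rcases eq_or_ne p ⊤ with rfl | hp
  · simp [pNorm_top, PiLp.norm_eq_ciSup]
  · have hp₀ : 0 < p.toReal :=
      ENNReal.toReal_pos (zero_lt_one.trans_le Fact.out).ne' hp
    simp [pNorm_of_ne_top hp, PiLp.norm_eq_sum hp₀]

variable [Fact (1 ≤ p)]

@[simp]
lemma pNorm_zero : pNorm p (0 : Fin m → ℝ) = 0 := by
  simp [pNorm_eq_norm_toLp]

lemma pNorm_add_le (x y : Fin m → ℝ) : pNorm p (x + y) ≤ pNorm p x + pNorm p y := by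
  simpa [pNorm_eq_norm_toLp] using norm_add_le (WithLp.toLp p x) (WithLp.toLp p y)

lemma pNorm_smul (c : ℝ) (x : Fin m → ℝ) : pNorm p (c • x) = |c| * pNorm p x := by
  simpa [pNorm_eq_norm_toLp] using norm_smul c (WithLp.toLp p x)

lemma pNorm_pos {x : Fin m → ℝ} (hx : x ≠ 0) : 0 < pNorm p x := by
  simpa [pNorm_eq_norm_toLp] using hx

end pNorm

section Duality

variable {m : ℕ}

structure IsDualWitness (p q : ℝ≥0∞) (u w : Fin m → ℝ) : Prop where
  nonneg : 0 ≤ w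
  pNorm_le_one : pNorm p w ≤ 1
  eq_zero_of_eq_zero : ∀ i, u i = 0 → w i = 0
  pNorm_le_dotProduct : pNorm q u ≤ w ⬝ᵥ u

lemma exists_isDualWitness_one_top {u : Fin m → ℝ} (hu : 0 ≤ u) (hu₀ : u ≠ 0) :
    ∃ w, IsDualWitness 1 ⊤ u w := by
  obtain ⟨j, hj⟩ := Function.ne_iff.mp hu₀
  have : Nonempty (Fin m) := ⟨j⟩
  obtain ⟨i₀, hi₀⟩ := Finite.exists_max u
  have hui₀ : 0 < u i₀ := ((hu j).lt_of_ne' hj).trans_le (hi₀ j)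
  refine ⟨Pi.single i₀ 1, ⟨?_, ?_, fun i hi => ?_, ?_⟩⟩
  · simp [Pi.single_nonneg]
  · simp [pNorm_one, Pi.single_apply, apply_ite]
  · exact Pi.single_eq_of_ne (by rintro rfl; exact hui₀.ne' hi) 1
  · rw [pNorm_top, single_dotProduct, one_mul]
    exact ciSup_le fun i => (abs_of_nonneg (hu i)).trans_le (hi₀ i)

lemma exists_isDualWitness_top_one {u : Fin m → ℝ} (hu : 0 ≤ u) :
    ∃ w, IsDualWitness ⊤ 1 u w := by
  refine ⟨fun i => if 0 < u i then 1 else 0, ⟨fun i => by positivity, ?_, fun i hi => ?_, ?_⟩⟩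
  · exact pNorm_top _ ▸ Real.iSup_le (fun i => by split_ifs <;> simp) zero_le_one
  · simp [hi]
  · rw [pNorm_one]
    refine Finset.sum_le_sum fun i _ => ?_
    dsimp only
    split_ifs with h
    · simp [abs_of_pos h]
    · simp [le_antisymm (not_lt.mp h) (hu i)]

lemma exists_isDualWitness_of_ne_top {p q : ℝ≥0∞} [hpq : p.HolderConjugate q] (hp : p ≠ ⊤)
    (hq : q ≠ ⊤) {u : Fin m → ℝ} (hu : 0 ≤ u) (hu₀ : u ≠ 0) : ∃ w, IsDualWitness p q u w := by
  have hQP : q.toReal.HolderConjugate p.toReal := ENNReal.HolderConjugate.toReal_of_ne_top hq hp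
  have : Fact (1 ≤ q) := ⟨hpq.symm.one_le⟩
  set Q := q.toReal
  set N := pNorm q u
  have hN : 0 < N := pNorm_pos hu₀
  set v := N⁻¹ • u
  have hv : 0 ≤ v := smul_nonneg (inv_nonneg.2 hN.le) hu
  have hv_sum : ∑ i, v i ^ Q = 1 := by
    have hv_norm : pNorm q v = 1 := by
      rw [pNorm_smul, abs_of_pos (inv_pos.2 hN), inv_mul_cancel₀ hN.ne']
    have := pNorm_rpow_toReal hpq.symm.ne_zero hq v
    rw [hv_norm, Real.one_rpow] at this
    simpa [abs_of_nonneg (hv _)] using this.symm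
  refine ⟨fun i => v i ^ (Q - 1), ⟨fun i => Real.rpow_nonneg (hv i) _, ?_, fun i hi => ?_, ?_⟩⟩
  · simp_rw [pNorm_of_ne_top hp, abs_of_nonneg (Real.rpow_nonneg (hv _) _),
      ← Real.rpow_mul (hv _), hQP.sub_one_mul_conj, hv_sum, Real.one_rpow, le_refl]
  · simp [v, hi, Real.zero_rpow hQP.sub_one_ne_zero]
  · have hv_mul (i : Fin m) : v i ^ (Q - 1) * v i = v i ^ Q := by
      rw [← Real.rpow_add_one' (hv i) (by simpa using hQP.ne_zero), sub_add_cancel]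
    refine le_of_eq ?_
    calc N = N * ∑ i, v i ^ Q := by rw [hv_sum, mul_one]
      _ = (fun i => v i ^ (Q - 1)) ⬝ᵥ u := by
        rw [← smul_inv_smul₀ hN.ne' u, dotProduct_smul, smul_eq_mul]
        simp only [dotProduct, hv_mul, v]

section HolderConjugate

variable {p q : ℝ≥0∞} [p.HolderConjugate q]

lemma exists_isDualWitness {u : Fin m → ℝ} (hu : 0 ≤ u) : ∃ w, IsDualWitness p q u w := by
  have : Fact (1 ≤ p) := ⟨ENNReal.HolderConjugate.one_le p q⟩
  have : Fact (1 ≤ q) := ⟨ENNReal.HolderConjugate.one_le q p⟩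
  rcases eq_or_ne u 0 with rfl | hu₀
  · exact ⟨0, ⟨le_rfl, by simp, fun _ _ => rfl, by simp⟩⟩
  rcases eq_or_ne q ⊤ with rfl | hq
  · obtain rfl : p = 1 := (ENNReal.HolderConjugate.eq_top_iff_eq_one ⊤ p).mp rfl
    exact exists_isDualWitness_one_top hu hu₀
  rcases eq_or_ne p ⊤ with rfl | hp
  · obtain rfl : q = 1 := (ENNReal.HolderConjugate.eq_top_iff_eq_one ⊤ q).mp rfl
    exact exists_isDualWitness_top_one hu
  exact exists_isDualWitness_of_ne_top hp hq hu hu₀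

lemma exists_nonneg_pNorm_le_one_pNorm_posPart_le (a : Fin m → ℝ) :
    ∃ w, 0 ≤ w ∧ pNorm p w ≤ 1 ∧ pNorm q a⁺ ≤ w ⬝ᵥ a := by
  obtain ⟨w, hw⟩ := exists_isDualWitness (p := p) (q := q) (posPart_nonneg a)
  refine ⟨w, hw.nonneg, hw.pNorm_le_one, hw.pNorm_le_dotProduct.trans_eq ?_⟩
  refine Finset.sum_congr rfl fun i _ => ?_
  rcases le_or_gt (a i) 0 with ha | ha
  · have hpos : a⁺ i = 0 := posPart_eq_zero.mpr ha
    simp [hpos, hw.eq_zero_of_eq_zero i hpos]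
  · simp [posPart_eq_self.mpr ha.le]

lemma pNorm_posPart_le_of_forall_dotProduct_sub_le {R ε : ℝ} {l₀ a : Fin m → ℝ} (hl₀ : 0 ≤ l₀)
    (hlt : pNorm p l₀ < R) (h : ∀ l, 0 ≤ l → pNorm p l ≤ R → (l - l₀) ⬝ᵥ a ≤ ε) :
    pNorm q a⁺ ≤ ε / (R - pNorm p l₀) := by
  have : Fact (1 ≤ p) := ⟨ENNReal.HolderConjugate.one_le p q⟩
  obtain ⟨w, hw₀, hw₁, hwa⟩ := exists_nonneg_pNorm_le_one_pNorm_posPart_le (p := p) (q := q) a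
  set d := R - pNorm p l₀
  have hd : 0 < d := sub_pos.mpr hlt
  have hl_norm : pNorm p (l₀ + d • w) ≤ R := calc
    pNorm p (l₀ + d • w) ≤ pNorm p l₀ + d * pNorm p w := by
      simpa [pNorm_smul, abs_of_pos hd] using pNorm_add_le (p := p) l₀ (d • w)
    _ ≤ pNorm p l₀ + d * 1 := by gcongr
    _ = R := by ring
  have hdwa := h (l₀ + d • w) (add_nonneg hl₀ (smul_nonneg hd.le hw₀)) hl_norm
  rw [add_sub_cancel_left, smul_dotProduct, smul_eq_mul] at hdwa
  rw [le_div_iff₀ hd, mul_comm]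
  exact (mul_le_mul_of_nonneg_left hwa hd.le).trans hdwa

end HolderConjugate

end Duality

section Integral

variable {X ι : Type*} [MeasurableSpace X] [Fintype ι] {μ : Measure X}

lemma integrable_add_dotProduct {f : X → ℝ} {F : ι → X → ℝ} (hf : Integrable f μ)
    (hF : ∀ i, Integrable (F i) μ) (v : ι → ℝ) :
    Integrable (fun x => f x + v ⬝ᵥ fun i => F i x) μ :=
  hf.add (integrable_finsetSum _ fun i _ => (hF i).const_mul (v i))

lemma integral_add_dotProduct {f : X → ℝ} {F : ι → X → ℝ} (hf : Integrable f μ)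
    (hF : ∀ i, Integrable (F i) μ) (v : ι → ℝ) :
    ∫ x, (f x + v ⬝ᵥ fun i => F i x) ∂μ = ∫ x, f x ∂μ + v ⬝ᵥ fun i => ∫ x, F i x ∂μ := by
  have hvF : ∀ i ∈ Finset.univ, Integrable (fun x => v i * F i x) μ :=
    fun i _ => (hF i).const_mul (v i)
  simp only [dotProduct]
  rw [integral_add hf (integrable_finsetSum _ hvF), integral_finsetSum _ hvF]
  simp only [integral_const_mul]

lemma integral_const_add_dotProduct [IsProbabilityMeasure μ] {f : X → ι → ℝ}
    (hf : Integrable f μ) (c : ℝ) (v : ι → ℝ) :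
    ∫ x, (c + f x ⬝ᵥ v) ∂μ = c + (∫ x, f x ∂μ) ⬝ᵥ v := by
  simpa [dotProduct_comm _ v, ← eval_integral hf.eval] using
    integral_add_dotProduct (integrable_const c) hf.eval v

end Integral

theorem lagrangian_suboptimality_and_feasibility_general
    {Θ : Type*} [MeasurableSpace Θ] {m : ℕ}
    (p q : ENNReal) (hpq : 1 / p + 1 / q = 1)
    (R ε : ℝ) (hR : 0 < R)
    (g0 : Θ → ℝ) (g : Fin m → Θ → ℝ)
    (L : Θ → (Fin m → ℝ) → ℝ)
    (hL : ∀ θ l, L θ l = g0 θ + ∑ i, l i * g i θ)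
    (Λ : Set (Fin m → ℝ))
    (hΛ : Λ = {l | (∀ i, 0 ≤ l i) ∧ pNorm p l ≤ R})
    (μ : Measure Θ) [IsProbabilityMeasure μ]
    (ν : Measure (Fin m → ℝ)) [IsProbabilityMeasure ν]
    (hν : ∀ᵐ l ∂ν, l ∈ Λ)
    (hg0int : Integrable g0 μ) (hgint : ∀ i, Integrable (g i) μ)
    (hlint : Integrable (fun l => l) ν)
    -- `(μ, ν)` is an `ε`-approximate mixed Nash equilibrium:
    -- `sup_{λ* ∈ Λ} E_θ[L(θ, λ*)] − inf_{θ*} E_λ[L(θ*, λ)] ≤ ε`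
    (hNash : ∀ l ∈ Λ, ∀ θ' : Θ, (∫ θ, L θ l ∂μ) - (∫ l', L θ' l' ∂ν) ≤ ε) :
    -- near-optimality
    (∀ θ' : Θ, (∀ i, g i θ' ≤ 0) → (∫ θ, g0 θ ∂μ) ≤ g0 θ' + ε) ∧
    -- near-feasibility
    (pNorm p (∫ l, l ∂ν) < R →
      pNorm q (fun i => max (∫ θ, g i θ ∂μ) 0)
        ≤ ε / (R - pNorm p (∫ l, l ∂ν))) := by
  have : p.HolderConjugate q := ENNReal.holderConjugate_iff.mpr (by simpa only [one_div] using hpq)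
  have : Fact (1 ≤ p) := ⟨ENNReal.HolderConjugate.one_le p q⟩
  subst hΛ
  set lbar := ∫ l, l ∂ν
  have hL' : ∀ θ l, L θ l = g0 θ + l ⬝ᵥ fun i => g i θ := hL
  have hLμ (l : Fin m → ℝ) :
      ∫ θ, L θ l ∂μ = ∫ θ, g0 θ ∂μ + l ⬝ᵥ fun i => ∫ θ, g i θ ∂μ := by
    simpa only [hL'] using integral_add_dotProduct hg0int hgint l
  have hLν (θ' : Θ) : ∫ l, L θ' l ∂ν = g0 θ' + lbar ⬝ᵥ fun i => g i θ' := by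
    simpa only [hL'] using integral_const_add_dotProduct hlint (g0 θ') fun i => g i θ'
  have hlbar : 0 ≤ lbar := integral_nonneg_of_ae (hν.mono fun l hl => hl.1)
  refine ⟨fun θ' hθ' => ?_, fun hlt => ?_⟩
  · have h := hNash 0 ⟨fun _ => le_rfl, by simpa using hR.le⟩ θ'
    have hfeas : lbar ⬝ᵥ (fun i => g i θ') ≤ 0 := by
      simpa using dotProduct_le_dotProduct_of_nonneg_left (w := lbar) (v := 0) hθ' hlbar
    rw [hLμ, hLν, zero_dotProduct] at h
    linarith
  · obtain ⟨θ₀, hθ₀⟩ := exists_le_integral (integrable_add_dotProduct hg0int hgint lbar)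
    rw [integral_add_dotProduct hg0int hgint] at hθ₀
    refine pNorm_posPart_le_of_forall_dotProduct_sub_le hlbar hlt fun l hl₀ hlR => ?_
    have h := hNash l ⟨hl₀, hlR⟩ θ₀
    rw [hLμ, hLν] at h
    rw [sub_dotProduct]
    linarith

/-- **Lagrangian sub{optimality,feasibility}** (Theorem 2 / Theorem B.1).
If `(μ, ν)` is an `ε`-approximate mixed Nash equilibrium of the Lagrangian game
with multiplier set `Λ = {λ ∈ ℝ₊^m : ‖λ‖_p ≤ R}`, then `μ` is `ε`-suboptimal
relative to every feasible point, and if `λ̄ := E_ν[λ]` has `‖λ̄‖_p < R` then the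
`q`-norm of the vector of expected constraint violations is at most
`ε / (R − ‖λ̄‖_p)`. -/
theorem lagrangian_suboptimality_and_feasibility
    {Θ : Type*} [MeasurableSpace Θ] {m : ℕ}
    (p q : ENNReal) (hp : 1 ≤ p) (hq : 1 ≤ q) (hpq : 1 / p + 1 / q = 1)
    (R ε : ℝ) (hR : 0 < R)
    (g0 : Θ → ℝ) (g : Fin m → Θ → ℝ)
    (L : Θ → (Fin m → ℝ) → ℝ)
    (hL : ∀ θ l, L θ l = g0 θ + ∑ i, l i * g i θ)
    (Λ : Set (Fin m → ℝ))
    (hΛ : Λ = {l | (∀ i, 0 ≤ l i) ∧ pNorm p l ≤ R})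
    (μ : Measure Θ) [IsProbabilityMeasure μ]
    (ν : Measure (Fin m → ℝ)) [IsProbabilityMeasure ν]
    (hν : ∀ᵐ l ∂ν, l ∈ Λ)
    (hg0int : Integrable g0 μ) (hgint : ∀ i, Integrable (g i) μ)
    (hLν : ∀ θ' : Θ, Integrable (fun l => L θ' l) ν)
    (hlint : Integrable (fun l => l) ν)
    -- `(μ, ν)` is an `ε`-approximate mixed Nash equilibrium:
    -- `sup_{λ* ∈ Λ} E_θ[L(θ, λ*)] − inf_{θ*} E_λ[L(θ*, λ)] ≤ ε`
    (hNash : ∀ l ∈ Λ, ∀ θ' : Θ, (∫ θ, L θ l ∂μ) - (∫ l', L θ' l' ∂ν) ≤ ε) :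
    -- near-optimality
    (∀ θ' : Θ, (∀ i, g i θ' ≤ 0) → (∫ θ, g0 θ ∂μ) ≤ g0 θ' + ε) ∧
    -- near-feasibility
    (pNorm p (∫ l, l ∂ν) < R →
      pNorm q (fun i => max (∫ θ, g i θ ∂μ) 0)
        ≤ ε / (R - pNorm p (∫ l, l ∂ν))) :=
  lagrangian_suboptimality_and_feasibility_general p q hpq R ε hR g0 g L hL Λ hΛ μ ν hν hg0int hgint
    hlint hNash
end

section
/- Let Λ := Δ^{m+1} be the (m+1)-dimensional probability simplex and let ℳ be the set of left-stochastic (m+1)×(m+1) matrices. Assume g̃_i(θ) ≥ g_i(θ) for all θ ∈ Θ and i ∈ {1,…,m}. Let π be a joint probability distribution of (θ,λ) on Θ × Λ such that E_{(θ,λ)∼π}[ℒ_θ(θ,λ)] − inf_{θ* ∈ Θ} E_{(θ,λ)∼π}[ℒ_θ(θ*,λ)] ≤ ε_θ and max_{M* ∈ ℳ} E_{(θ,λ)∼π}[ℒ_λ(θ, M*λ)] − E_{(θ,λ)∼π}[ℒ_λ(θ,λ)] ≤ ε_λ. Let λ̄ := E_π[λ] and assume λ̄₁ > 0, and define the reweighted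 distribution θ̄ by E_{θ̄}[f(θ̄)] := E_π[λ₁ f(θ)] / λ̄₁ for every bounded measurable f : Θ → ℝ. Then θ̄ is nearly-optimal: E_{θ̄}[g₀(θ̄)] ≤ inf{g₀(θ*) : θ* ∈ Θ, g̃_i(θ*) ≤ 0 for all i ∈ {1,…,m}} + (ε_θ + ε_λ)/λ̄₁; and nearly-feasible w.r.t. the original constraints: max_{i ∈ {1,…,m}} E_{θ̄}[g_i(θ̄)] ≤ ε_λ/λ̄₁. -/
open MeasureTheory

/-- **Proxy-Lagrangian sub{optimality,feasibility}** (Theorem 3 / Theorem B.3).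
Let `π` be a joint distribution over `Θ × Δ^{m+1}` with external-regret error
`εθ` for the `θ`-player w.r.t. `ℒ_θ`, and swap-regret error `εlam` for the
`λ`-player w.r.t. `ℒ_λ` (swaps given by left-stochastic matrices).  Let
`λ̄₁ := E_π[λ₁] > 0`, and let `θ̄` be `θ` reweighted by the importance weight
`λ₁`, so that `E[f(θ̄)] = E_π[λ₁ f(θ)] / λ̄₁`.  Then `θ̄` is nearly optimal
relative to every point feasible for the *proxy* constraints, and nearly
feasible for the *original* constraints. -/
theorem proxy_lagrangian_suboptimality_and_feasibility
    {Θ : Type*} [MeasurableSpace Θ] {m : ℕ}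
    (εθ εlam : ℝ)
    (g0 : Θ → ℝ) (g gt : Fin m → Θ → ℝ)
    -- the proxy constraints upper-bound the original constraints
    (hproxy : ∀ i θ, g i θ ≤ gt i θ)
    (Lθ Llam : Θ → (Fin (m + 1) → ℝ) → ℝ)
    (hLθ : ∀ θ l, Lθ θ l = l 0 * g0 θ + ∑ i : Fin m, l i.succ * gt i θ)
    (hLlam : ∀ θ l, Llam θ l = ∑ i : Fin m, l i.succ * g i θ)
    (π : Measure (Θ × (Fin (m + 1) → ℝ))) [IsProbabilityMeasure π]
    (hπ : ∀ᵐ x ∂π, x.2 ∈ stdSimplex ℝ (Fin (m + 1)))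
    -- all relevant expectations exist
    (hint1 : Integrable (fun x => Lθ x.1 x.2) π)
    (hint2 : ∀ θ' : Θ, Integrable (fun x => Lθ θ' x.2) π)
    (hint3 : Integrable (fun x => Llam x.1 x.2) π)
    (hint4 : ∀ M : Matrix (Fin (m + 1)) (Fin (m + 1)) ℝ,
      Integrable (fun x => Llam x.1 (M.mulVec x.2)) π)
    (hint5 : Integrable (fun x => x.2 0) π)
    (hint6 : Integrable (fun x => x.2 0 * g0 x.1) π)
    (hint7 : ∀ i, Integrable (fun x => x.2 0 * g i x.1) π)
    -- external-regret condition for the `θ`-player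
    (hεθ : ∀ θ' : Θ, (∫ x, Lθ x.1 x.2 ∂π) - (∫ x, Lθ θ' x.2 ∂π) ≤ εθ)
    -- swap-regret condition for the `λ`-player, over left-stochastic matrices
    (hεlam : ∀ M : Matrix (Fin (m + 1)) (Fin (m + 1)) ℝ,
      (∀ j, (fun i => M i j) ∈ stdSimplex ℝ (Fin (m + 1))) →
      (∫ x, Llam x.1 (M.mulVec x.2) ∂π) - (∫ x, Llam x.1 x.2 ∂π) ≤ εlam)
    (lamBar1 : ℝ) (hlamBar1 : lamBar1 = ∫ x, x.2 0 ∂π) (hpos : 0 < lamBar1) :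
    -- near-optimality of `θ̄` (comparator feasible w.r.t. the proxy constraints)
    (∀ θ' : Θ, (∀ i, gt i θ' ≤ 0) →
      (∫ x, x.2 0 * g0 x.1 ∂π) / lamBar1 ≤ g0 θ' + (εθ + εlam) / lamBar1) ∧
    -- near-feasibility of `θ̄` w.r.t. the original constraints
    (∀ i, (∫ x, x.2 0 * g i x.1 ∂π) / lamBar1 ≤ εlam / lamBar1) := by

  -- Lower bound on the lambda-player's payoff via the "all to coordinate 0" matrix
  have hLlamLB : -εlam ≤ ∫ x, Llam x.1 x.2 ∂π := by
    set M0 : Matrix (Fin (m+1)) (Fin (m+1)) ℝ := fun r _ => if r = 0 then 1 else 0 with hM0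
    have hM0cols : ∀ j, (fun i => M0 i j) ∈ stdSimplex ℝ (Fin (m+1)) := by
      intro j
      refine ⟨fun i => ?_, ?_⟩
      · dsimp [M0]; split <;> norm_num
      · simp [M0]
    have hzero : ∀ (a : Θ) (l : Fin (m+1) → ℝ), Llam a (M0.mulVec l) = 0 := by
      intro a l
      rw [hLlam]
      have h : ∀ i : Fin m, (M0.mulVec l) i.succ = 0 := by
        intro i
        simp [M0, Matrix.mulVec, dotProduct, Fin.succ_ne_zero]
      simp [h]
    have h := hεlam M0 hM0cols
    simp only [hzero] at h
    simp only [integral_zero] at h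
    linarith
  constructor
  · -- near-optimality
    intro θ' hfeas
    have hLlam_le : ∫ x, Llam x.1 x.2 ∂π ≤ ∫ x, (Lθ x.1 x.2 - x.2 0 * g0 x.1) ∂π := by
      refine integral_mono_ae hint3 (hint1.sub hint6) ?_
      filter_upwards [hπ] with x hx
      rw [hLlam, hLθ, add_sub_cancel_left]
      exact Finset.sum_le_sum fun i _ =>
        mul_le_mul_of_nonneg_left (hproxy i x.1) (hx.1 i.succ)
    rw [integral_sub hint1 hint6] at hLlam_le
    have h1 : ∫ x, Lθ θ' x.2 ∂π ≤ lamBar1 * g0 θ' := by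
      have heq : ∫ x, x.2 0 * g0 θ' ∂π = lamBar1 * g0 θ' := by
        rw [hlamBar1, ← integral_mul_const]
      rw [← heq]
      refine integral_mono_ae (hint2 θ') (hint5.mul_const _) ?_
      filter_upwards [hπ] with x hx
      rw [hLθ]
      have h2 : ∑ i, x.2 i.succ * gt i θ' ≤ 0 :=
        Finset.sum_nonpos fun i _ =>
          mul_nonpos_of_nonneg_of_nonpos (hx.1 i.succ) (hfeas i)
      linarith
    have h3 := hεθ θ'
    have key : ∫ x, x.2 0 * g0 x.1 ∂π ≤ lamBar1 * g0 θ' + (εθ + εlam) := by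
      linarith
    rw [div_le_iff₀ hpos, add_mul, div_mul_cancel₀ _ hpos.ne']
    nlinarith [key]
  · -- near-feasibility
    intro i₀
    rw [div_le_div_iff_of_pos_right hpos]
    set M : Matrix (Fin (m+1)) (Fin (m+1)) ℝ :=
      fun r c => if c = 0 then (if r = i₀.succ then 1 else 0)
        else (if r = c then 1 else 0) with hMdef
    have hMcols : ∀ j, (fun i => M i j) ∈ stdSimplex ℝ (Fin (m+1)) := by
      intro j
      refine ⟨fun i => ?_, ?_⟩
      · dsimp [M]; split_ifs <;> norm_num
      · by_cases hj : j = 0 <;> simp [M, hj]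
    have hmul : ∀ (l : Fin (m+1) → ℝ) (i : Fin m),
        M.mulVec l i.succ = (if i = i₀ then l 0 else 0) + l i.succ := by
      intro l i
      rw [Matrix.mulVec, dotProduct, Fin.sum_univ_succ]
      have h1 : M i.succ 0 * l 0 = if i = i₀ then l 0 else 0 := by
        dsimp [M]
        by_cases h : i = i₀
        · simp [h]
        · simp [h, fun hc => h (Fin.succ_inj.mp hc)]
      have h2 : ∀ j : Fin m, M i.succ j.succ * l j.succ
          = if i = j then l j.succ else 0 := by
        intro j
        dsimp [M]
        by_cases h : i = j
        · simp [h, Fin.succ_ne_zero]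
        · simp [h, Fin.succ_ne_zero, fun hc => h (Fin.succ_inj.mp hc)]
      simp only [h1, h2, Finset.sum_ite_eq, Finset.mem_univ, if_true]
    have hLlamM : ∀ (a : Θ) (l : Fin (m+1) → ℝ),
        Llam a (M.mulVec l) = l 0 * g i₀ a + Llam a l := by
      intro a l
      rw [hLlam, hLlam]
      simp only [hmul, add_mul, Finset.sum_add_distrib, ite_mul, zero_mul,
        Finset.sum_ite_eq', Finset.mem_univ, if_true]
    have h := hεlam M hMcols
    simp only [hLlamM] at h
    rw [integral_add (hint7 i₀) hint3] at h
    linarith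
end

section
/- In the setting of the proxy-Lagrangian equilibrium theorem (joint distribution π over Θ × Δ^{m+1} with external-regret error ε_θ for the θ-player w.r.t. ℒ_θ and swap-regret error ε_λ for the λ-player w.r.t. ℒ_λ, and λ̄ := E_π[λ]), suppose there exists θ' ∈ Θ satisfying all of the proxy constraints with margin γ > 0, i.e. g̃_i(θ') ≤ −γ for all i ∈ {1,…,m}, and let B_{g₀} ≥ sup_{θ∈Θ} g₀(θ) − inf_{θ∈Θ} g₀(θ) be a finite bound on the range of g₀. Then λ̄₁ ≥ (γ − ε_θ − ε_λ)/(γ + B_{g₀}). -/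
open MeasureTheory

/-- **Lower bound on `λ̄₁` for the proxy-Lagrangian** (Lemma B.4).  In the
setting of the proxy-Lagrangian equilibrium theorem, if some `θ'` satisfies all
of the proxy constraints with margin `γ > 0`, and `B ≥ sup g₀ − inf g₀`, then
`λ̄₁ ≥ (γ − εθ − ελ) / (γ + B)`, where `λ̄₁ := E_π[λ₁]`. -/
theorem proxy_lagrangian_lambda_bound
    {Θ : Type*} [MeasurableSpace Θ] {m : ℕ}
    (εθ εlam γ B : ℝ) (hγ : 0 < γ)
    (g0 : Θ → ℝ) (g gt : Fin m → Θ → ℝ)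
    (hproxy : ∀ i θ, g i θ ≤ gt i θ)
    -- `B` is a finite bound on the range of the objective
    (hB : ∀ a b : Θ, g0 a - g0 b ≤ B)
    (Lθ Llam : Θ → (Fin (m + 1) → ℝ) → ℝ)
    (hLθ : ∀ θ l, Lθ θ l = l 0 * g0 θ + ∑ i : Fin m, l i.succ * gt i θ)
    (hLlam : ∀ θ l, Llam θ l = ∑ i : Fin m, l i.succ * g i θ)
    (π : Measure (Θ × (Fin (m + 1) → ℝ))) [IsProbabilityMeasure π]
    (hπ : ∀ᵐ x ∂π, x.2 ∈ stdSimplex ℝ (Fin (m + 1)))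
    (hint1 : Integrable (fun x => Lθ x.1 x.2) π)
    (hint2 : ∀ θ' : Θ, Integrable (fun x => Lθ θ' x.2) π)
    (hint3 : Integrable (fun x => Llam x.1 x.2) π)
    (hint4 : ∀ M : Matrix (Fin (m + 1)) (Fin (m + 1)) ℝ,
      Integrable (fun x => Llam x.1 (M.mulVec x.2)) π)
    (hint5 : Integrable (fun x => x.2 0) π)
    -- external-regret condition for the `θ`-player
    (hεθ : ∀ θ' : Θ, (∫ x, Lθ x.1 x.2 ∂π) - (∫ x, Lθ θ' x.2 ∂π) ≤ εθ)
    -- swap-regret condition for the `λ`-player, over left-stochastic matrices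
    (hεlam : ∀ M : Matrix (Fin (m + 1)) (Fin (m + 1)) ℝ,
      (∀ j, (fun i => M i j) ∈ stdSimplex ℝ (Fin (m + 1))) →
      (∫ x, Llam x.1 (M.mulVec x.2) ∂π) - (∫ x, Llam x.1 x.2 ∂π) ≤ εlam)
    -- a point satisfying all of the *proxy* constraints with margin `γ`
    (θ' : Θ) (hθ' : ∀ i, gt i θ' ≤ -γ) :
    (γ - εθ - εlam) / (γ + B) ≤ ∫ x, x.2 0 ∂π := by
  have hB0 : 0 ≤ B := by simpa using hB θ' θ'
  set p := ∫ x, x.2 0 ∂π with hp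
  -- Step 1: swap regret with the matrix sending everything to coordinate 0
  set M : Matrix (Fin (m + 1)) (Fin (m + 1)) ℝ := fun i _ => if i = 0 then 1 else 0 with hM
  have hcol : ∀ j, (fun i => M i j) ∈ stdSimplex ℝ (Fin (m + 1)) := by
    intro j
    constructor
    · intro i; simp only [hM]; split <;> norm_num
    · simp [hM]
  have hMv : ∀ θ l, Llam θ (M.mulVec l) = 0 := by
    intro θ l
    rw [hLlam]
    apply Finset.sum_eq_zero
    intro i _
    have : M.mulVec l i.succ = 0 := by
      simp [Matrix.mulVec, dotProduct, hM, Fin.succ_ne_zero]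
    rw [this, zero_mul]
  have h1 : -εlam ≤ ∫ x, Llam x.1 x.2 ∂π := by
    have := hεlam M hcol
    simp only [hMv] at this
    rw [integral_const] at this
    simp at this
    linarith
  -- Step 2: pointwise inequality
  have key : ∀ᵐ x ∂π, (-B) * x.2 0 + Llam x.1 x.2 + γ * (1 - x.2 0)
      ≤ Lθ x.1 x.2 - Lθ θ' x.2 := by
    filter_upwards [hπ] with x hx
    obtain ⟨hnn, hsum⟩ := hx
    have hs : ∑ i : Fin m, x.2 i.succ = 1 - x.2 0 := by
      rw [Fin.sum_univ_succ] at hsum; linarith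
    rw [hLθ, hLθ, hLlam]
    have hA : x.2 0 * (-B) ≤ x.2 0 * g0 x.1 - x.2 0 * g0 θ' := by
      rw [← mul_sub]
      exact mul_le_mul_of_nonneg_left (by linarith [hB θ' x.1]) (hnn 0)
    have hC : ∑ i : Fin m, x.2 i.succ * g i x.1 ≤ ∑ i : Fin m, x.2 i.succ * gt i x.1 :=
      Finset.sum_le_sum fun i _ => mul_le_mul_of_nonneg_left (hproxy i x.1) (hnn i.succ)
    have hD : γ * (1 - x.2 0) ≤ -∑ i : Fin m, x.2 i.succ * gt i θ' := by
      have : ∑ i : Fin m, x.2 i.succ * gt i θ' ≤ ∑ i : Fin m, x.2 i.succ * (-γ) :=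
        Finset.sum_le_sum fun i _ => mul_le_mul_of_nonneg_left (hθ' i) (hnn i.succ)
      have h2 : ∑ i : Fin m, x.2 i.succ * (-γ) = (1 - x.2 0) * (-γ) := by
        rw [← Finset.sum_mul, hs]
      rw [h2] at this
      linarith
    linarith
  -- Step 3: integrate
  have hIL : Integrable (fun x : Θ × (Fin (m + 1) → ℝ) =>
      (-B) * x.2 0 + Llam x.1 x.2 + γ * (1 - x.2 0)) π := by
    apply Integrable.add
    · exact (hint5.const_mul (-B)).add hint3
    · have : (fun x : Θ × (Fin (m + 1) → ℝ) => γ * (1 - x.2 0))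
          = fun x => γ - γ * x.2 0 := by funext x; ring
      rw [this]
      exact (integrable_const γ).sub (hint5.const_mul γ)
  have hIR : Integrable (fun x : Θ × (Fin (m + 1) → ℝ) => Lθ x.1 x.2 - Lθ θ' x.2) π :=
    hint1.sub (hint2 θ')
  have hmono := integral_mono_ae hIL hIR key
  have hIγ : Integrable (fun x : Θ × (Fin (m + 1) → ℝ) => γ * (1 - x.2 0)) π := by
    simp only [mul_sub, mul_one]
    exact (integrable_const γ).sub (hint5.const_mul γ)
  have i3 : ∫ x, γ * (1 - x.2 0) ∂π = γ - γ * p := by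
    simp only [mul_sub, mul_one]
    rw [integral_sub (integrable_const γ) (hint5.const_mul γ), integral_const,
      integral_const_mul]
    simp [hp]
  have hLHS : ∫ x, ((-B) * x.2 0 + Llam x.1 x.2 + γ * (1 - x.2 0)) ∂π
      = (-B) * p + (∫ x, Llam x.1 x.2 ∂π) + (γ - γ * p) := by
    have hI12 : Integrable (fun x : Θ × (Fin (m + 1) → ℝ) =>
        (-B) * x.2 0 + Llam x.1 x.2) π := (hint5.const_mul (-B)).add hint3
    rw [integral_add hI12 hIγ, integral_add (hint5.const_mul (-B)) hint3,
      integral_const_mul, i3]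
  have hRHS : ∫ x, (Lθ x.1 x.2 - Lθ θ' x.2) ∂π ≤ εθ := by
    rw [integral_sub hint1 (hint2 θ')]
    exact hεθ θ'
  rw [hLHS] at hmono
  rw [div_le_iff₀ (by linarith)]
  nlinarith [hmono, hRHS, h1]
end

section
/- Let Λ := {λ ∈ ℝ₊^m : ‖λ‖₁ ≤ R} and ℒ(θ,λ) := g₀(θ) + Σ_{i=1}^m λ_i g_i(θ). Suppose sequences θ^(1),…,θ^(T) ∈ Θ and λ^(1),…,λ^(T) ∈ Λ are generated as follows: λ^(1) = 0; at each step t, θ^(t) is a ρ-approximate minimizer of ℒ(·, λ^(t)), i.e. ℒ(θ^(t), λ^(t)) ≤ inf_{θ*∈Θ} ℒ(θ*, λ^(t)) + ρ; Δ^(t) := (g₁(θ^(t)),…,g_m(θ^(t))) is the gradient of ℒ(θ^(t),·) w.r.t. λ; and λ^(t+1) = Π_Λ(λ^(t) + η Δ^(t)), where Π_Λ is the Euclidean projection onto Λ and η := R/(B_Δ √(2T)) with B_Δ ≥ max_{t∈{1,…,T}} ‖Δ^(t)‖₂. Then max_{λ*∈Λ} (1/T) Σ_{t=1}^T ℒ(θ^(t),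 λ*) − inf_{θ*∈Θ} (1/T) Σ_{t=1}^T ℒ(θ*, λ^(t)) ≤ ρ + R B_Δ √(2/T). -/
/-!
The `λ`-player runs projected gradient ascent on the convex set `Λ`. Projection onto a convex
set does not increase the distance to any point `λ*` of the set, so
`‖λ⁽ᵗ⁺¹⁾ - λ*‖² ≤ ‖λ⁽ᵗ⁾ - λ*‖² - 2η⟪Δ⁽ᵗ⁾, λ* - λ⁽ᵗ⁾⟫ + η²‖Δ⁽ᵗ⁾‖²`; telescoping and
`‖λ⁽¹⁾ - λ*‖ = ‖λ*‖ ≤ ‖λ*‖₁ ≤ R` bound the regret `∑ₜ ⟪Δ⁽ᵗ⁾, λ* - λ⁽ᵗ⁾⟫` by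
`R²/(2η) + ηT B_Δ²/2 ≤ R B_Δ √(2T)`. As `ℒ` is affine in `λ` with gradient `Δ⁽ᵗ⁾`, this regret is
`∑ₜ ℒ(θ⁽ᵗ⁾, λ*) - ℒ(θ⁽ᵗ⁾, λ⁽ᵗ⁾)`, and the oracle bounds `ℒ(θ⁽ᵗ⁾, λ⁽ᵗ⁾)` by `ℒ(θ*, λ⁽ᵗ⁾) + ρ`.
-/

noncomputable def euclNorm {k : ℕ} (x : Fin k → ℝ) : ℝ := Real.sqrt (∑ i, x i ^ 2)

open Finset
open scoped InnerProductSpace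

theorem euclNorm_eq_norm {k : ℕ} (x : Fin k → ℝ) : euclNorm x = ‖WithLp.toLp 2 x‖ := by
  simp [euclNorm, EuclideanSpace.norm_eq]

section Simplex

variable {ι : Type*} [Fintype ι]

theorem convex_setOf_nonneg_sum_le (R : ℝ) :
    Convex ℝ {l : EuclideanSpace ℝ ι | (∀ i, 0 ≤ l i) ∧ ∑ i, l i ≤ R} := by
  intro a ⟨ha0, haR⟩ b ⟨hb0, hbR⟩ s t hs ht hst
  refine ⟨fun i => ?_, ?_⟩
  · simp only [PiLp.add_apply, PiLp.smul_apply, smul_eq_mul]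
    have := ha0 i
    have := hb0 i
    positivity
  · simp only [PiLp.add_apply, PiLp.smul_apply, smul_eq_mul, sum_add_distrib, ← mul_sum]
    calc s * ∑ i, a i + t * ∑ i, b i ≤ s * R + t * R := by gcongr
      _ = R := by rw [← add_mul, hst, one_mul]

theorem EuclideanSpace.norm_le_sum_of_nonneg {l : EuclideanSpace ℝ ι} (hl : ∀ i, 0 ≤ l i) :
    ‖l‖ ≤ ∑ i, l i := by
  rw [EuclideanSpace.norm_eq, Real.sqrt_le_left (sum_nonneg fun i _ => hl i)]
  simpa using sum_sq_le_sq_sum_of_nonneg fun i _ => hl i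

end Simplex

section ProjectedGradient

variable {E : Type*} [NormedAddCommGroup E] [InnerProductSpace ℝ E] {K : Set E}

theorem norm_sub_le_of_isMinOn_norm_sub (hK : Convex ℝ K) {u v y : E} (hv : v ∈ K)
    (hmin : IsMinOn (‖· - u‖) K v) (hy : y ∈ K) : ‖v - y‖ ≤ ‖u - y‖ := by
  have : Nonempty K := ⟨⟨v, hv⟩⟩
  have hinf : ‖u - v‖ = ⨅ w : K, ‖u - w‖ :=
    le_antisymm (le_ciInf fun w => by simpa [norm_sub_rev] using isMinOn_iff.mp hmin w w.2)
      (ciInf_le (f := fun w : K => ‖u - w‖)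
        ⟨0, Set.forall_mem_range.mpr fun _ => norm_nonneg _⟩ ⟨v, hv⟩)
  have hobtuse : ⟪u - v, y - v⟫_ℝ ≤ 0 :=
    (norm_eq_iInf_iff_real_inner_le_zero hK hv).mp hinf y hy
  have hsplit : ‖u - y‖ ^ 2 = ‖u - v‖ ^ 2 - 2 * ⟪u - v, y - v⟫_ℝ + ‖v - y‖ ^ 2 := by
    rw [show u - y = (u - v) - (y - v) by abel, norm_sub_sq_real, norm_sub_rev y v]
  have hsq : ‖v - y‖ ^ 2 ≤ ‖u - y‖ ^ 2 := by nlinarith [sq_nonneg ‖u - v‖]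
  exact (pow_le_pow_iff_left₀ (norm_nonneg _) (norm_nonneg _) two_ne_zero).mp hsq

variable {η : ℝ} {x d : ℕ → E} {T : ℕ}

theorem norm_sub_sq_succ_le (hK : Convex ℝ K) {t : ℕ} (hmem : x (t + 1) ∈ K)
    (hmin : IsMinOn (‖· - (x t + η • d t)‖) K (x (t + 1))) {y : E} (hy : y ∈ K) :
    ‖x (t + 1) - y‖ ^ 2 ≤ ‖x t - y‖ ^ 2 + 2 * η * ⟪d t, x t - y⟫_ℝ + η ^ 2 * ‖d t‖ ^ 2 := by
  have hstep := norm_sub_le_of_isMinOn_norm_sub hK hmem hmin hy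
  calc ‖x (t + 1) - y‖ ^ 2 ≤ ‖x t + η • d t - y‖ ^ 2 := by gcongr
    _ = ‖x t - y‖ ^ 2 + 2 * η * ⟪d t, x t - y⟫_ℝ + η ^ 2 * ‖d t‖ ^ 2 := by
      rw [add_sub_right_comm, norm_add_sq_real, inner_smul_right, real_inner_comm, norm_smul,
        mul_pow, Real.norm_eq_abs, sq_abs]
      ring

theorem two_mul_sum_inner_le (hK : Convex ℝ K)
    (hx : ∀ t < T, x (t + 1) ∈ K ∧ IsMinOn (‖· - (x t + η • d t)‖) K (x (t + 1)))
    {y : E} (hy : y ∈ K) :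
    2 * η * ∑ t ∈ range T, ⟪d t, y - x t⟫_ℝ
      ≤ ‖x 0 - y‖ ^ 2 + η ^ 2 * ∑ t ∈ range T, ‖d t‖ ^ 2 := by
  have hstep : ∀ t ∈ range T, 2 * η * ⟪d t, y - x t⟫_ℝ
      ≤ (‖x t - y‖ ^ 2 - ‖x (t + 1) - y‖ ^ 2) + η ^ 2 * ‖d t‖ ^ 2 := by
    intro t ht
    obtain ⟨hmem, hmin⟩ := hx t (mem_range.mp ht)
    have := norm_sub_sq_succ_le hK hmem hmin hy
    rw [← neg_sub, inner_neg_right]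
    linarith
  calc 2 * η * ∑ t ∈ range T, ⟪d t, y - x t⟫_ℝ
      ≤ ∑ t ∈ range T, ((‖x t - y‖ ^ 2 - ‖x (t + 1) - y‖ ^ 2) + η ^ 2 * ‖d t‖ ^ 2) := by
        rw [mul_sum]
        exact sum_le_sum hstep
    _ = ‖x 0 - y‖ ^ 2 - ‖x T - y‖ ^ 2 + η ^ 2 * ∑ t ∈ range T, ‖d t‖ ^ 2 := by
        rw [sum_add_distrib, sum_range_sub' (fun t => ‖x t - y‖ ^ 2), mul_sum]
    _ ≤ ‖x 0 - y‖ ^ 2 + η ^ 2 * ∑ t ∈ range T, ‖d t‖ ^ 2 := by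
        linarith [sq_nonneg ‖x T - y‖]

theorem norm_iterate_sub_le_of_zero_step (hK : Convex ℝ K)
    (hx : ∀ t < T, x (t + 1) ∈ K ∧ IsMinOn (‖· - (x t + (0 : ℝ) • d t)‖) K (x (t + 1)))
    {y : E} (hy : y ∈ K) : ∀ t < T, ‖x t - y‖ ≤ ‖x 0 - y‖ := by
  intro t ht
  induction t with
  | zero => rfl
  | succ t ih =>
    obtain ⟨hmem, hmin⟩ := hx t (by omega)
    calc ‖x (t + 1) - y‖ ≤ ‖x t + (0 : ℝ) • d t - y‖ :=
          norm_sub_le_of_isMinOn_norm_sub hK hmem hmin hy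
      _ ≤ ‖x 0 - y‖ := by simpa using ih (by omega)

theorem sum_inner_le_mul_sqrt_of_step_eq (hK : Convex ℝ K)
    (hx : ∀ t < T, x (t + 1) ∈ K ∧ IsMinOn (‖· - (x t + η • d t)‖) K (x (t + 1)))
    {y : E} (hy : y ∈ K) {D B : ℝ} (hD : ‖x 0 - y‖ ≤ D) (hd : ∀ t < T, ‖d t‖ ≤ B)
    (hT : 0 < T) (hη : η = D / (B * √(2 * T))) :
    ∑ t ∈ range T, ⟪d t, y - x t⟫_ℝ ≤ D * B * √(2 * T) := by
  have hB : 0 ≤ B := (norm_nonneg _).trans (hd 0 hT)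
  have hD0 : 0 ≤ D := (norm_nonneg _).trans hD
  have hs : 0 < √(2 * T) := Real.sqrt_pos.mpr (by positivity)
  rcases (div_nonneg hD0 (by positivity) : 0 ≤ D / (B * √(2 * T))).eq_or_lt with hη0 | hηpos
  · -- the iterates never move away from `y`, and `D * B = 0`
    have hDB : D * B = 0 := by
      rcases div_eq_zero_iff.mp hη0.symm with h | h
      · simp [h]
      · simp [(mul_eq_zero.mp h).resolve_right hs.ne']
    rw [← hη] at hη0
    subst hη0
    have hstay := norm_iterate_sub_le_of_zero_step hK hx hy
    calc ∑ t ∈ range T, ⟪d t, y - x t⟫_ℝ ≤ ∑ t ∈ range T, B * D := by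
          refine sum_le_sum fun t ht => ?_
          have ht := mem_range.mp ht
          calc ⟪d t, y - x t⟫_ℝ ≤ ‖d t‖ * ‖y - x t‖ := real_inner_le_norm _ _
            _ ≤ B * D := by
              rw [norm_sub_rev]
              exact mul_le_mul (hd t ht) ((hstay t ht).trans hD) (norm_nonneg _) hB
      _ = D * B * √(2 * T) := by simp [mul_comm B D, hDB]
  · rw [← hη] at hηpos
    have hsumd : ∑ t ∈ range T, ‖d t‖ ^ 2 ≤ T * B ^ 2 := by
      simpa using sum_le_sum fun t ht =>
        pow_le_pow_left₀ (norm_nonneg _) (hd t (mem_range.mp ht)) 2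
    have hquad := two_mul_sum_inner_le hK hx hy
    have hBne : B ≠ 0 := by
      rintro rfl
      simp [hη] at hηpos
    have hs2 : √(2 * T) ^ 2 = 2 * T := Real.sq_sqrt (by positivity)
    have hDeq : D = η * B * √(2 * T) := by
      rw [hη]
      field_simp
    have hx0 : ‖x 0 - y‖ ^ 2 ≤ D ^ 2 := pow_le_pow_left₀ (norm_nonneg _) hD 2
    have hmul : 2 * η * ∑ t ∈ range T, ⟪d t, y - x t⟫_ℝ ≤ 2 * η * (D * B * √(2 * T)) :=
      calc 2 * η * ∑ t ∈ range T, ⟪d t, y - x t⟫_ℝ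
          ≤ D ^ 2 + η ^ 2 * (T * B ^ 2) := by
            have := mul_le_mul_of_nonneg_left hsumd (sq_nonneg η)
            linarith
        _ ≤ 2 * η * (D * B * √(2 * T)) := by
            have key : (η * B * √(2 * T)) ^ 2 = 2 * T * (η * B) ^ 2 := by
              rw [mul_pow, hs2]
              ring
            rw [hDeq]
            nlinarith [key, mul_nonneg (sq_nonneg (η * B)) (Nat.cast_nonneg (α := ℝ) T)]
    exact le_of_mul_le_mul_left hmul (by positivity)

end ProjectedGradient

theorem lagrangian_sub_eq_inner {Θ : Type*} {m : ℕ} {g0 : Θ → ℝ} {g : Fin m → Θ → ℝ}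
    {L : Θ → (Fin m → ℝ) → ℝ} (hL : ∀ θ l, L θ l = g0 θ + ∑ i, l i * g i θ)
    (θ : Θ) (l l' : Fin m → ℝ) :
    L θ l' - L θ l = ⟪WithLp.toLp 2 fun i => g i θ, WithLp.toLp 2 l' - WithLp.toLp 2 l⟫_ℝ := by
  simp only [hL, PiLp.inner_apply, PiLp.sub_apply, Real.inner_apply, add_sub_add_left_eq_sub,
    ← sum_sub_distrib]
  exact sum_congr rfl fun i _ => by ring

theorem average_sub_le {T : ℕ} (hT : 0 < T) {a b ρ c : ℝ}
    (h : a ≤ b + T * ρ + c * √(2 * T)) :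
    1 / (T : ℝ) * a - 1 / (T : ℝ) * b ≤ ρ + c * √(2 / T) := by
  have hT' : (0 : ℝ) < T := by exact_mod_cast hT
  have hsqrt : √(2 * T) = T * √(2 / T) := by
    rw [show (2 : ℝ) * T = T ^ 2 * (2 / T) by field_simp, Real.sqrt_mul (sq_nonneg _),
      Real.sqrt_sq hT'.le]
  rw [← mul_sub, one_div, inv_mul_le_iff₀ hT']
  rw [hsqrt] at h
  linarith

/-- **Convergence of the oracle-based Lagrangian algorithm** (Lemma 4 /
Algorithm 1).  The `θ`-player uses a `ρ`-approximate optimization oracle and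
the `λ`-player performs projected gradient ascent on
`Λ = {λ ∈ ℝ₊^m : ‖λ‖₁ ≤ R}` with step size `η = R / (B_Δ √(2T))`, starting
from `λ^(1) = 0`.  Then the resulting iterates form an approximate equilibrium:
`max_{λ*∈Λ} (1/T) ∑ₜ L(θ^(t), λ*) − inf_{θ*} (1/T) ∑ₜ L(θ*, λ^(t))
  ≤ ρ + R B_Δ √(2/T)`. -/
theorem oracle_lagrangian_convergence
    {Θ : Type*} {m : ℕ}
    (g0 : Θ → ℝ) (g : Fin m → Θ → ℝ)
    (L : Θ → (Fin m → ℝ) → ℝ)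
    (hL : ∀ θ l, L θ l = g0 θ + ∑ i, l i * g i θ)
    (R ρ BΔ : ℝ)
    (Λ : Set (Fin m → ℝ))
    (hΛ : Λ = {l | (∀ i, 0 ≤ l i) ∧ ∑ i, l i ≤ R})
    (T : ℕ) (hT : 0 < T)
    (η : ℝ) (hη : η = R / (BΔ * Real.sqrt (2 * T)))
    (θs : ℕ → Θ) (ls : ℕ → Fin m → ℝ) (Δs : ℕ → Fin m → ℝ)
    -- `Δ^(t)` is the gradient of `L(θ^(t), ·)` w.r.t. `λ`
    (hΔ : ∀ t, Δs t = fun i => g i (θs t))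
    (hinit : ls 0 = 0)
    -- `θ^(t)` is a `ρ`-approximate minimizer of `L(·, λ^(t))`
    (horacle : ∀ t < T, ∀ θ' : Θ, L (θs t) (ls t) ≤ L θ' (ls t) + ρ)
    (hBΔ : ∀ t < T, euclNorm (Δs t) ≤ BΔ)
    -- `λ^(t+1)` is the Euclidean projection of `λ^(t) + η Δ^(t)` onto `Λ`
    (hproj : ∀ t < T, ls (t + 1) ∈ Λ ∧
      ∀ y ∈ Λ, euclNorm (ls (t + 1) - (ls t + η • Δs t))
        ≤ euclNorm (y - (ls t + η • Δs t))) :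
    ∀ l' ∈ Λ, ∀ θ' : Θ,
      (1 / (T : ℝ)) * ∑ t ∈ Finset.range T, L (θs t) l'
        - (1 / (T : ℝ)) * ∑ t ∈ Finset.range T, L θ' (ls t)
      ≤ ρ + R * BΔ * Real.sqrt (2 / T) := by
  intro l' hl' θ'
  subst hΛ
  set K := {l : EuclideanSpace ℝ (Fin m) | (∀ i, 0 ≤ l i) ∧ ∑ i, l i ≤ R}
  set x : ℕ → EuclideanSpace ℝ (Fin m) := fun t => WithLp.toLp 2 (ls t)
  set d : ℕ → EuclideanSpace ℝ (Fin m) := fun t => WithLp.toLp 2 (Δs t)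
  set y : EuclideanSpace ℝ (Fin m) := WithLp.toLp 2 l'
  have hx : ∀ t < T, x (t + 1) ∈ K ∧ IsMinOn (‖· - (x t + η • d t)‖) K (x (t + 1)) := by
    intro t ht
    obtain ⟨hmem, hmin⟩ := hproj t ht
    exact ⟨hmem, isMinOn_iff.mpr fun z hz => by
      simpa [x, d, euclNorm_eq_norm] using hmin z.ofLp hz⟩
  have hD : ‖x 0 - y‖ ≤ R := by
    simpa [x, y, hinit] using (EuclideanSpace.norm_le_sum_of_nonneg hl'.1).trans hl'.2
  have hd : ∀ t < T, ‖d t‖ ≤ BΔ := fun t ht => by simpa [d, euclNorm_eq_norm] using hBΔ t ht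
  have hregret := sum_inner_le_mul_sqrt_of_step_eq (convex_setOf_nonneg_sum_le R) hx hl' hD hd hT hη
  have hstep : ∀ t ∈ range T, L (θs t) l' ≤ L θ' (ls t) + ρ + ⟪d t, y - x t⟫_ℝ := by
    intro t ht
    have horacle_t := horacle t (mem_range.mp ht) θ'
    have hgap := lagrangian_sub_eq_inner hL (θs t) (ls t) l'
    simp only [d, x, y, hΔ]
    linarith
  apply average_sub_le hT
  have hsum := sum_le_sum hstep
  simp only [sum_add_distrib, sum_const, card_range, nsmul_eq_mul] at hsum
  linarith
end

section
/- Consider the proxy-Lagrangians ℒ_θ, ℒ_λ : Θ × Δ^{m+1} → ℝ. Suppose sequences θ^(1),…,θ^(T) ∈ Θ and λ^(1),…,λ^(T) ∈ Δ^{m+1} are generated as follows, starting from the (m+1)×(m+1) matrix M^(1) with all entries equal to 1/(m+1): at each step t, λ^(t) is a stationary distribution of M^(t) (M^(t) λ^(t) = λ^(t)); θ^(t) satisfies ℒ_θ(θ^(t), λ^(t)) ≤ inf_{θ*∈Θ} ℒ_θ(θ*, λ^(t)) + ρ; Δ^(t) := (0, g₁(θ^(t)),…,g_m(θ^(t)))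 is the gradient of ℒ_λ(θ^(t),·) w.r.t. λ; M̃^(t+1) := M^(t) ⊙ exp(η Δ^(t) (λ^(t))ᵀ) (element-wise product and exponential), and M^(t+1) is obtained by normalizing each column of M̃^(t+1) to sum to 1; with step size η := √((m+1) ln(m+1) / (T B_Δ²)) where B_Δ ≥ max_t ‖Δ^(t)‖_∞. Then: (1/T) Σ_{t=1}^T ℒ_θ(θ^(t),λ^(t)) − inf_{θ*∈Θ} (1/T) Σ_{t=1}^T ℒ_θ(θ*,λ^(t)) ≤ ρ, and max_{M*∈ℳ} (1/T) Σ_{t=1}^T ℒ_λ(θ^(t), M*λ^(t)) − (1/T) Σ_{t=1}^T ℒ_λ(θ^(t),λ^(t)) ≤ 2 B_Δ √((m+1) ln(m+1) / T). -/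
/-!
The bound for the `θ`-player is the oracle inequality averaged over the rounds.

For the `λ`-player, column `j` of `M^(t)` is exactly the Hedge (exponential weights)
distribution for the rewards `i ↦ Δ^(t)_i λ^(t)_j`. Hoeffding's lemma bounds the growth of the
log-potential of Hedge, so each column has external regret at most
`log (m+1) / η + (η/2) Σ_t (B_Δ λ^(t)_j)²`. Stationarity `M^(t) λ^(t) = λ^(t)` splits
`ℒ_λ(θ^(t), λ^(t))` into the payoffs of the columns, and for a left-stochastic `M*` the payoff
of column `j` under `M*` is a convex combination of the payoffs of fixed actions, so the swap
regret is at most the sum of the column regrets. With `Σ_j (λ^(t)_j)² ≤ 1` this is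
`(m+1) log (m+1) / η + η B_Δ² T / 2`, which for the given `η` equals
`(3/2) B_Δ √((m+1) log (m+1) T)`. When `m = 0` or `B_Δ = 0` all `Δ^(t)` vanish.
-/

open Finset Real MeasureTheory ProbabilityTheory

-- Hoeffding's lemma for a distribution on a finite type.
theorem sum_mul_exp_le_of_abs_le {ι : Type*} [Fintype ι] {p : ι → ℝ}
    (hp : p ∈ stdSimplex ℝ ι) {x : ι → ℝ} {b : ℝ} (hx : ∀ i, |x i| ≤ b) (t : ℝ) :
    ∑ i, p i * exp (t * x i) ≤ exp (t * ∑ i, p i * x i + b ^ 2 * t ^ 2 / 2) := by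
  let _ : MeasurableSpace ι := ⊤
  have _ : MeasurableSingletonClass ι := ⟨fun _ => trivial⟩
  let P : PMF ι := PMF.ofFintype (fun i => ENNReal.ofReal (p i)) (by
    rw [← ENNReal.ofReal_sum_of_nonneg fun i _ => hp.1 i, hp.2, ENNReal.ofReal_one])
  have hP : ∀ i, (P i).toReal = p i := fun i => ENNReal.toReal_ofReal (hp.1 i)
  have hX := hasSubgaussianMGF_of_mem_Icc (μ := P.toMeasure) (X := x) (a := -b) (b := b)
    (Measurable.of_discrete.aemeasurable) (ae_of_all _ fun i => abs_le.1 (hx i))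
  have := hX.mgf_le t
  simp only [mgf, PMF.integral_eq_sum, hP, smul_eq_mul] at this
  have hc : (((‖b - -b‖₊ / 2) ^ 2 : NNReal) : ℝ) = b ^ 2 := by
    simp only [NNReal.coe_pow, NNReal.coe_div, coe_nnnorm, Real.norm_eq_abs, sub_neg_eq_add,
      ← two_mul, abs_mul, abs_two, NNReal.coe_ofNat]
    rw [mul_div_cancel_left₀ _ two_ne_zero, sq_abs]
  rw [hc] at this
  rw [exp_add, ← div_le_iff₀' (exp_pos _), sum_div]
  refine le_of_eq_of_le (sum_congr rfl fun i _ => ?_) this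
  rw [mul_sub, exp_sub, mul_div_assoc]

section Simplex

variable {ι : Type*} [Fintype ι] {p : ι → ℝ}

lemma exists_sum_mul_le_of_mem_stdSimplex (hp : p ∈ stdSimplex ℝ ι) (c : ι → ℝ) :
    ∃ i₀, ∑ i, p i * c i ≤ c i₀ := by
  have hne : (univ : Finset ι).Nonempty := by
    by_contra h
    simpa [not_nonempty_iff_eq_empty.1 h] using hp.2
  obtain ⟨i₀, -, hi₀⟩ := exists_max_image univ c hne
  refine ⟨i₀, ?_⟩
  calc ∑ i, p i * c i ≤ ∑ i, p i * c i₀ :=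
        sum_le_sum fun i hi => mul_le_mul_of_nonneg_left (hi₀ i hi) (hp.1 i)
    _ = c i₀ := by rw [← sum_mul, hp.2, one_mul]

lemma sum_sq_le_one_of_mem_stdSimplex (hp : p ∈ stdSimplex ℝ ι) : ∑ i, p i ^ 2 ≤ 1 := by
  calc ∑ i, p i ^ 2 ≤ ∑ i, p i := sum_le_sum fun i _ =>
        pow_le_of_le_one (hp.1 i) (mem_Icc_of_mem_stdSimplex hp i).2 two_ne_zero
    _ = 1 := hp.2

end Simplex

section Hedge

variable {ι : Type*} [Fintype ι]

noncomputable def hedgePotential (η : ℝ) (v : ℕ → ι → ℝ) (t : ℕ) : ℝ :=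
  ∑ k, exp (η * ∑ s ∈ range t, v s k)

noncomputable def hedgeWeights (η : ℝ) (v : ℕ → ι → ℝ) (t : ℕ) (i : ι) : ℝ :=
  exp (η * ∑ s ∈ range t, v s i) / hedgePotential η v t

variable {η : ℝ} {v : ℕ → ι → ℝ}

lemma hedgePotential_pos [Nonempty ι] (t : ℕ) : 0 < hedgePotential η v t :=
  sum_pos (fun _ _ => exp_pos _) univ_nonempty

lemma hedgeWeights_mem_stdSimplex [Nonempty ι] (t : ℕ) :
    hedgeWeights η v t ∈ stdSimplex ℝ ι :=
  ⟨fun _ => div_nonneg (exp_pos _).le (hedgePotential_pos t).le, by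
    simp only [hedgeWeights]
    rw [← sum_div]
    exact div_self (hedgePotential_pos t).ne'⟩

lemma hedgePotential_succ [Nonempty ι] (t : ℕ) :
    hedgePotential η v (t + 1) =
      hedgePotential η v t * ∑ i, hedgeWeights η v t i * exp (η * v t i) := by
  simp only [hedgePotential, hedgeWeights, mul_sum, sum_range_succ, mul_add, exp_add]
  refine sum_congr rfl fun i _ => ?_
  field_simp [(hedgePotential_pos (v := v) (η := η) t).ne']

lemma hedgeWeights_zero (i : ι) : hedgeWeights η v 0 i = 1 / Fintype.card ι := by
  simp [hedgeWeights, hedgePotential]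

lemma hedgeWeights_succ [Nonempty ι] (t : ℕ) (i : ι) :
    hedgeWeights η v (t + 1) i = hedgeWeights η v t i * exp (η * v t i)
      / ∑ k, hedgeWeights η v t k * exp (η * v t k) := by
  rw [hedgeWeights, hedgePotential_succ, sum_range_succ, mul_add, exp_add, hedgeWeights]
  ring

lemma eq_hedgeWeights_of_update [Nonempty ι] {p : ℕ → ι → ℝ} {T : ℕ}
    (h0 : ∀ i, p 0 i = 1 / Fintype.card ι)
    (hstep : ∀ t < T, ∀ i,
      p (t + 1) i = p t i * exp (η * v t i) / ∑ k, p t k * exp (η * v t k)) :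
    ∀ t ≤ T, p t = hedgeWeights η v t := by
  intro t ht
  induction t with
  | zero => funext i; rw [h0, hedgeWeights_zero]
  | succ t ih =>
    funext i
    rw [hstep t (by omega), ih (by omega), hedgeWeights_succ]

lemma log_hedgePotential_succ_le [Nonempty ι] {t : ℕ} {b : ℝ} (hb : ∀ i, |v t i| ≤ b) :
    log (hedgePotential η v (t + 1)) ≤ log (hedgePotential η v t)
      + η * ∑ i, hedgeWeights η v t i * v t i + b ^ 2 * η ^ 2 / 2 := by
  have hpos : 0 < ∑ i, hedgeWeights η v t i * exp (η * v t i) :=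
    sum_pos (fun _ _ => mul_pos (div_pos (exp_pos _) (hedgePotential_pos t)) (exp_pos _))
      univ_nonempty
  rw [hedgePotential_succ, log_mul (hedgePotential_pos t).ne' hpos.ne', add_assoc,
    add_le_add_iff_left, ← log_exp (_ + _)]
  exact log_le_log hpos (sum_mul_exp_le_of_abs_le (hedgeWeights_mem_stdSimplex t) hb η)

theorem hedge_regret_le (hη : 0 < η) {T : ℕ} {b : ℕ → ℝ}
    (hb : ∀ t < T, ∀ i, |v t i| ≤ b t) (i₀ : ι) :
    ∑ t ∈ range T, v t i₀ - ∑ t ∈ range T, ∑ i, hedgeWeights η v t i * v t i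
      ≤ log (Fintype.card ι) / η + η / 2 * ∑ t ∈ range T, b t ^ 2 := by
  have : Nonempty ι := ⟨i₀⟩
  have htelescope : log (hedgePotential η v T) - log (hedgePotential η v 0)
      ≤ η * ∑ t ∈ range T, ∑ i, hedgeWeights η v t i * v t i
        + η ^ 2 / 2 * ∑ t ∈ range T, b t ^ 2 := by
    rw [← sum_range_sub (fun t => log (hedgePotential η v t)), mul_sum, mul_sum,
      ← sum_add_distrib]
    refine sum_le_sum fun t ht => ?_
    linarith [log_hedgePotential_succ_le (η := η) (hb t (mem_range.1 ht))]
  have hinit : log (hedgePotential η v 0) = log (Fintype.card ι) := by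
    simp [hedgePotential]
  have hfinal : η * ∑ t ∈ range T, v t i₀ ≤ log (hedgePotential η v T) := by
    rw [← log_exp (η * _)]
    exact log_le_log (exp_pos _) (single_le_sum (f := fun k => exp (η * ∑ s ∈ range T, v s k))
      (fun _ _ => (exp_pos _).le) (mem_univ i₀))
  rw [← mul_le_mul_iff_of_pos_left hη, mul_add, mul_div_cancel₀ _ hη.ne', mul_sub]
  linarith

theorem hedge_regret_le_of_mem_stdSimplex (hη : 0 < η) {T : ℕ} {b : ℕ → ℝ}
    (hb : ∀ t < T, ∀ i, |v t i| ≤ b t) {q : ι → ℝ} (hq : q ∈ stdSimplex ℝ ι) :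
    ∑ t ∈ range T, ∑ i, q i * v t i - ∑ t ∈ range T, ∑ i, hedgeWeights η v t i * v t i
      ≤ log (Fintype.card ι) / η + η / 2 * ∑ t ∈ range T, b t ^ 2 := by
  obtain ⟨i₀, hi₀⟩ := exists_sum_mul_le_of_mem_stdSimplex hq fun i => ∑ t ∈ range T, v t i
  rw [sum_comm]
  simp only [← mul_sum]
  linarith [hedge_regret_le hη hb i₀]

end Hedge

lemma sum_mul_sum_mul_eq_sum_columns {ι : Type*} [Fintype ι] (T : ℕ) (Δ lam : ℕ → ι → ℝ)
    (X : ℕ → ι → ι → ℝ) :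
    ∑ t ∈ range T, ∑ i, Δ t i * ∑ j, X t i j * lam t j
      = ∑ j, ∑ t ∈ range T, ∑ i, X t i j * (Δ t i * lam t j) := by
  conv_rhs => rw [sum_comm]
  refine sum_congr rfl fun t _ => ?_
  simp only [mul_sum]
  rw [sum_comm]
  exact sum_congr rfl fun j _ => sum_congr rfl fun i _ => by ring

theorem swap_regret_le_of_hedge_columns {ι : Type*} [Fintype ι] {η B : ℝ} (hη : 0 < η) {T : ℕ}
    {Δ lam : ℕ → ι → ℝ} {M : ℕ → ι → ι → ℝ}
    (hB : ∀ t < T, ∀ i, |Δ t i| ≤ B)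
    (hlam : ∀ t < T, lam t ∈ stdSimplex ℝ ι)
    (hstat : ∀ t < T, ∀ i, ∑ j, M t i j * lam t j = lam t i)
    (hM : ∀ t < T, ∀ i j, M t i j = hedgeWeights η (fun s k => Δ s k * lam s j) t i)
    {M' : ι → ι → ℝ} (hM' : ∀ j, (fun i => M' i j) ∈ stdSimplex ℝ ι) :
    ∑ t ∈ range T, ∑ i, Δ t i * ∑ j, M' i j * lam t j - ∑ t ∈ range T, ∑ i, Δ t i * lam t i
      ≤ Fintype.card ι * log (Fintype.card ι) / η + η * B ^ 2 * T / 2 := by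
  have hcol : ∀ j, ∑ t ∈ range T, ∑ i, M' i j * (Δ t i * lam t j)
      - ∑ t ∈ range T, ∑ i, M t i j * (Δ t i * lam t j)
      ≤ log (Fintype.card ι) / η + η / 2 * ∑ t ∈ range T, (B * lam t j) ^ 2 := by
    intro j
    have hMj : ∑ t ∈ range T, ∑ i, M t i j * (Δ t i * lam t j) = ∑ t ∈ range T,
        ∑ i, hedgeWeights η (fun s k => Δ s k * lam s j) t i * (Δ t i * lam t j) :=
      sum_congr rfl fun t ht => sum_congr rfl fun i _ => by rw [hM t (mem_range.1 ht)]
    rw [hMj]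
    refine hedge_regret_le_of_mem_stdSimplex hη (fun t ht i => ?_) (hM' j)
    rw [abs_mul, abs_of_nonneg ((hlam t ht).1 j)]
    exact mul_le_mul_of_nonneg_right (hB t ht i) ((hlam t ht).1 j)
  have hsq : ∑ j, ∑ t ∈ range T, (B * lam t j) ^ 2 ≤ B ^ 2 * T := by
    rw [sum_comm]
    calc ∑ t ∈ range T, ∑ j, (B * lam t j) ^ 2 ≤ ∑ t ∈ range T, B ^ 2 := by
          refine sum_le_sum fun t ht => ?_
          simp only [mul_pow, ← mul_sum]
          exact mul_le_of_le_one_right (sq_nonneg B)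
            (sum_sq_le_one_of_mem_stdSimplex (hlam t (mem_range.1 ht)))
      _ = B ^ 2 * T := by rw [sum_const, card_range, nsmul_eq_mul, mul_comm]
  calc ∑ t ∈ range T, ∑ i, Δ t i * ∑ j, M' i j * lam t j - ∑ t ∈ range T, ∑ i, Δ t i * lam t i
      = ∑ j, (∑ t ∈ range T, ∑ i, M' i j * (Δ t i * lam t j)
          - ∑ t ∈ range T, ∑ i, M t i j * (Δ t i * lam t j)) := by
        rw [sum_sub_distrib, ← sum_mul_sum_mul_eq_sum_columns T Δ lam fun _ => M',
          ← sum_mul_sum_mul_eq_sum_columns T Δ lam M]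
        congr 1
        exact sum_congr rfl fun t ht => sum_congr rfl fun i _ => by rw [hstat t (mem_range.1 ht)]
    _ ≤ ∑ j, (log (Fintype.card ι) / η + η / 2 * ∑ t ∈ range T, (B * lam t j) ^ 2) :=
        sum_le_sum fun j _ => hcol j
    _ = Fintype.card ι * log (Fintype.card ι) / η
          + η / 2 * ∑ j, ∑ t ∈ range T, (B * lam t j) ^ 2 := by
        rw [sum_add_distrib, ← mul_sum, sum_const, card_univ, nsmul_eq_mul, mul_div_assoc]
    _ ≤ Fintype.card ι * log (Fintype.card ι) / η + η * B ^ 2 * T / 2 := by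
        nlinarith [mul_le_mul_of_nonneg_left hsq (half_pos hη).le]

lemma average_sub_average_le {T : ℕ} (hT : 0 < T) {a b : ℕ → ℝ} {ρ : ℝ}
    (h : ∀ t < T, a t ≤ b t + ρ) :
    1 / (T : ℝ) * ∑ t ∈ range T, a t - 1 / (T : ℝ) * ∑ t ∈ range T, b t ≤ ρ := by
  calc 1 / (T : ℝ) * ∑ t ∈ range T, a t - 1 / (T : ℝ) * ∑ t ∈ range T, b t
      = 1 / (T : ℝ) * ∑ t ∈ range T, (a t - b t) := by rw [sum_sub_distrib, mul_sub]
    _ ≤ 1 / (T : ℝ) * ∑ t ∈ range T, ρ := by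
        gcongr with t ht
        linarith [h t (mem_range.1 ht)]
    _ = ρ := by
        rw [sum_const, card_range, nsmul_eq_mul]
        field_simp

lemma hedge_bound_at_tuned_step {K T B : ℝ} (hK : 0 < K) (hT : 0 < T) (hB : 0 < B) :
    1 / T * (K / √(K / (T * B ^ 2)) + √(K / (T * B ^ 2)) * B ^ 2 * T / 2)
      ≤ 2 * B * √(K / T) := by
  rw [← div_div, sqrt_div (div_pos hK hT).le, sqrt_sq hB.le]
  have hs : 0 < √(K / T) := sqrt_pos.2 (div_pos hK hT)
  have hK' : K = √(K / T) ^ 2 * T := by rw [sq_sqrt (div_pos hK hT).le]; field_simp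
  generalize √(K / T) = s at hs hK' ⊢
  subst hK'
  field_simp
  nlinarith

theorem oracle_proxy_lagrangian_convergence_general
    {Θ : Type*} {m : ℕ}
    (g : Fin m → Θ → ℝ)
    (Lθ Llam : Θ → (Fin (m + 1) → ℝ) → ℝ)
    (hLlam : ∀ θ l, Llam θ l = ∑ i : Fin m, l i.succ * g i θ)
    (T : ℕ) (hT : 0 < T) (ρ BΔ : ℝ)
    (η : ℝ)
    (hη : η = Real.sqrt (((m : ℝ) + 1) * Real.log ((m : ℝ) + 1) / (T * BΔ ^ 2)))
    (θs : ℕ → Θ) (lams : ℕ → Fin (m + 1) → ℝ)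
    (Ms : ℕ → Fin (m + 1) → Fin (m + 1) → ℝ)
    (Δs : ℕ → Fin (m + 1) → ℝ)
    -- `Δ^(t) = (0, g₁(θ^(t)), …, g_m(θ^(t)))` is the gradient of `ℒ_λ(θ^(t),·)`
    (hΔ : ∀ t, Δs t = Matrix.vecCons (0 : ℝ) fun i : Fin m => g i (θs t))
    (hMinit : ∀ i j, Ms 0 i j = 1 / ((m : ℝ) + 1))
    -- `λ^(t)` is a stationary distribution of `M^(t)`
    (hstat : ∀ t < T, lams t ∈ stdSimplex ℝ (Fin (m + 1)) ∧
      ∀ i, ∑ j, Ms t i j * lams t j = lams t i)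
    -- `θ^(t)` is a `ρ`-approximate minimizer of `ℒ_θ(·, λ^(t))`
    (horacle : ∀ t < T, ∀ θ' : Θ, Lθ (θs t) (lams t) ≤ Lθ θ' (lams t) + ρ)
    -- `B_Δ` bounds `‖Δ^(t)‖_∞`
    (hBΔ : ∀ t < T, ∀ j, |Δs t j| ≤ BΔ)
    -- multiplicative update followed by column normalization
    (hupdate : ∀ t < T, ∀ i j,
      Ms (t + 1) i j = (Ms t i j * Real.exp (η * (Δs t i * lams t j)))
        / ∑ k, Ms t k j * Real.exp (η * (Δs t k * lams t j))) :
    -- the `θ`-player's external regret is at most `ρ`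
    (∀ θ' : Θ,
      (1 / (T : ℝ)) * ∑ t ∈ Finset.range T, Lθ (θs t) (lams t)
        - (1 / (T : ℝ)) * ∑ t ∈ Finset.range T, Lθ θ' (lams t) ≤ ρ) ∧
    -- the `λ`-player's swap regret is small
    (∀ M' : Fin (m + 1) → Fin (m + 1) → ℝ,
      (∀ j, (fun i => M' i j) ∈ stdSimplex ℝ (Fin (m + 1))) →
      (1 / (T : ℝ)) * ∑ t ∈ Finset.range T,
          Llam (θs t) (fun i => ∑ j, M' i j * lams t j)
        - (1 / (T : ℝ)) * ∑ t ∈ Finset.range T, Llam (θs t) (lams t)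
      ≤ 2 * BΔ * Real.sqrt (((m : ℝ) + 1) * Real.log ((m : ℝ) + 1) / T)) := by
  refine ⟨fun θ' => average_sub_average_le hT fun t ht => horacle t ht θ', fun M' hM' => ?_⟩
  have hLlamΔ : ∀ t l, Llam (θs t) l = ∑ i, Δs t i * l i := fun t l => by
    simp [hLlam, hΔ, Fin.sum_univ_succ, mul_comm]
  simp only [hLlamΔ, ← mul_sub]
  have hB : 0 ≤ BΔ := (abs_nonneg _).trans (hBΔ 0 hT 0)
  by_cases hdeg : m = 0 ∨ BΔ = 0
  · have hzero : ∀ t ∈ range T, ∀ i, Δs t i = 0 := by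
      rintro t ht i
      rcases hdeg with rfl | hB0
      · rw [Fin.fin_one_eq_zero i, hΔ]; rfl
      · exact abs_nonpos_iff.1 (hB0 ▸ hBΔ t (mem_range.1 ht) i)
    simp +contextual only [hzero, zero_mul, sum_const_zero, sub_self, mul_zero]
    positivity
  obtain ⟨hm, hB0⟩ := not_or.1 hdeg
  have hK : 0 < ((m : ℝ) + 1) * log ((m : ℝ) + 1) :=
    mul_pos (by positivity) (log_pos (by norm_cast; omega))
  have hBpos : 0 < BΔ := hB.lt_of_ne' hB0
  have hT' : (0 : ℝ) < T := by exact_mod_cast hT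
  have hMs : ∀ t < T, ∀ i j, Ms t i j = hedgeWeights η (fun s k => Δs s k * lams s j) t i :=
    fun t ht i j => congrFun (eq_hedgeWeights_of_update (p := fun t i => Ms t i j)
      (fun i => by simp [hMinit]) (fun t ht i => hupdate t ht i j) t ht.le) i
  have hswap := swap_regret_le_of_hedge_columns (hη ▸ sqrt_pos.2 (by positivity)) hBΔ
    (fun t ht => (hstat t ht).1) (fun t ht => (hstat t ht).2) hMs hM'
  simp only [Fintype.card_fin, Nat.cast_add, Nat.cast_one] at hswap
  calc _ ≤ 1 / (T : ℝ) * (((m : ℝ) + 1) * log ((m : ℝ) + 1) / η + η * BΔ ^ 2 * T / 2) :=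
        mul_le_mul_of_nonneg_left hswap (by positivity)
    _ ≤ _ := hη ▸ hedge_bound_at_tuned_step hK hT' hBpos

/-- **Convergence of the oracle-based proxy-Lagrangian algorithm** (Lemma C.5 /
Algorithm 4).  The `θ`-player uses a `ρ`-approximate optimization oracle for
`ℒ_θ(·, λ^(t))`, while the `λ`-player runs swap-regret-minimizing matrix
multiplicative updates, playing a stationary distribution `λ^(t)` of the
left-stochastic matrix `M^(t)`.  Then the `θ`-player's average external regret
is at most `ρ`, and the `λ`-player's average swap regret is at most
`2 B_Δ √((m+1) ln(m+1) / T)`. -/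
theorem oracle_proxy_lagrangian_convergence
    {Θ : Type*} {m : ℕ}
    (g0 : Θ → ℝ) (g gt : Fin m → Θ → ℝ)
    (Lθ Llam : Θ → (Fin (m + 1) → ℝ) → ℝ)
    (hLθ : ∀ θ l, Lθ θ l = l 0 * g0 θ + ∑ i : Fin m, l i.succ * gt i θ)
    (hLlam : ∀ θ l, Llam θ l = ∑ i : Fin m, l i.succ * g i θ)
    (T : ℕ) (hT : 0 < T) (ρ BΔ : ℝ)
    (η : ℝ)
    (hη : η = Real.sqrt (((m : ℝ) + 1) * Real.log ((m : ℝ) + 1) / (T * BΔ ^ 2)))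
    (θs : ℕ → Θ) (lams : ℕ → Fin (m + 1) → ℝ)
    (Ms : ℕ → Fin (m + 1) → Fin (m + 1) → ℝ)
    (Δs : ℕ → Fin (m + 1) → ℝ)
    -- `Δ^(t) = (0, g₁(θ^(t)), …, g_m(θ^(t)))` is the gradient of `ℒ_λ(θ^(t),·)`
    (hΔ : ∀ t, Δs t = Matrix.vecCons (0 : ℝ) fun i : Fin m => g i (θs t))
    (hMinit : ∀ i j, Ms 0 i j = 1 / ((m : ℝ) + 1))
    -- `λ^(t)` is a stationary distribution of `M^(t)`
    (hstat : ∀ t < T, lams t ∈ stdSimplex ℝ (Fin (m + 1)) ∧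
      ∀ i, ∑ j, Ms t i j * lams t j = lams t i)
    -- `θ^(t)` is a `ρ`-approximate minimizer of `ℒ_θ(·, λ^(t))`
    (horacle : ∀ t < T, ∀ θ' : Θ, Lθ (θs t) (lams t) ≤ Lθ θ' (lams t) + ρ)
    -- `B_Δ` bounds `‖Δ^(t)‖_∞`
    (hBΔ : ∀ t < T, ∀ j, |Δs t j| ≤ BΔ)
    -- multiplicative update followed by column normalization
    (hupdate : ∀ t < T, ∀ i j,
      Ms (t + 1) i j = (Ms t i j * Real.exp (η * (Δs t i * lams t j)))
        / ∑ k, Ms t k j * Real.exp (η * (Δs t k * lams t j))) :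
    -- the `θ`-player's external regret is at most `ρ`
    (∀ θ' : Θ,
      (1 / (T : ℝ)) * ∑ t ∈ Finset.range T, Lθ (θs t) (lams t)
        - (1 / (T : ℝ)) * ∑ t ∈ Finset.range T, Lθ θ' (lams t) ≤ ρ) ∧
    -- the `λ`-player's swap regret is small
    (∀ M' : Fin (m + 1) → Fin (m + 1) → ℝ,
      (∀ j, (fun i => M' i j) ∈ stdSimplex ℝ (Fin (m + 1))) →
      (1 / (T : ℝ)) * ∑ t ∈ Finset.range T,
          Llam (θs t) (fun i => ∑ j, M' i j * lams t j)
        - (1 / (T : ℝ)) * ∑ t ∈ Finset.range T, Llam (θs t) (lams t)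
      ≤ 2 * BΔ * Real.sqrt (((m : ℝ) + 1) * Real.log ((m : ℝ) + 1) / T)) :=
  oracle_proxy_lagrangian_convergence_general g Lθ Llam hLlam T hT ρ BΔ η hη θs lams Ms Δs hΔ hMinit
    hstat horacle hBΔ hupdate
end

section
/- (Mirror descent.) Let Θ ⊆ ℝ^n be compact convex, f₁,…,f_T : Θ → ℝ convex, and ‖·‖ a norm on ℝ^n with dual norm ‖·‖_*. Suppose the distance-generating function Ψ : Θ → ℝ₊ is nonnegative, differentiable and 1-strongly convex w.r.t. ‖·‖, with B_Ψ ≥ max_{θ∈Θ} Ψ(θ). Starting from θ^(1) = argmin_{θ∈Θ} Ψ(θ), perform T iterations: θ̃^(t+1) satisfies ∇Ψ(θ̃^(t+1)) = ∇Ψ(θ^(t)) − η ǧ_t(θ^(t)), and θ^(t+1) = argmin_{θ∈Θ} B_Ψ(θ | θ̃^(t+1)), where ǧ_t(θ^(t)) ∈ ∂f_t(θ^(t)) is a subgradient, ‖ǧ_t(θ^(t))‖_* ≤ B_ǧ for all t, η := √(B_Ψ/(T B_ǧ²)), and B_Ψ(θ | θ') := Ψ(θ) − Ψ(θ') − ⟨∇Ψ(θ'),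 θ − θ'⟩ is the Bregman divergence of Ψ. Then for every θ* ∈ Θ: (1/T) Σ_{t=1}^T f_t(θ^(t)) − (1/T) Σ_{t=1}^T f_t(θ*) ≤ 2 B_ǧ √(B_Ψ/T). -/
/-- The dual norm of a (semi)norm `N` on `Fin n → ℝ`:
`‖v‖_* = sup {⟨v, x⟩ : N x ≤ 1}`. -/
noncomputable def dualNorm {n : ℕ} (N : (Fin n → ℝ) → ℝ) (v : Fin n → ℝ) : ℝ :=
  sSup ((fun x => ∑ i, v i * x i) '' {x | N x ≤ 1})

/-- The Bregman divergence associated with `Ψ` (whose gradient is `gradΨ`). -/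
noncomputable def bregman {n : ℕ} (Ψ : (Fin n → ℝ) → ℝ)
    (gradΨ : (Fin n → ℝ) → (Fin n → ℝ)) (a b : Fin n → ℝ) : ℝ :=
  Ψ a - Ψ b - ∑ i, gradΨ b i * (a i - b i)

/-!
Each mirror step satisfies, for every comparator `θ ∈ Θ`,
`η (f_t(θ_t) - f_t(θ)) ≤ η ⟨ǧ_t, θ_t - θ⟩ ≤ D(θ, θ_t) - D(θ, θ_{t+1}) + η² B_ǧ² / 2`,
where `D` is the Bregman divergence of `Ψ`: the three-point identity turns `η ⟨ǧ_t, θ_t - θ⟩`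
into `D(θ, θ_t) - D(θ, θ̃_{t+1}) + D(θ_t, θ̃_{t+1})`, the first-order optimality of the Bregman
projection gives `D(θ, θ_{t+1}) ≤ D(θ, θ̃_{t+1})`, and strong convexity bounds
`D(θ_t, θ̃_{t+1}) ≤ η B_ǧ ‖θ_t - θ̃_{t+1}‖ - ‖θ_t - θ̃_{t+1}‖² / 2 ≤ η² B_ǧ² / 2`.
Summing telescopes to `η · regret ≤ D(θ, θ_1) + T η² B_ǧ² / 2 ≤ B_Ψ + T η² B_ǧ² / 2`, and the
choice of `η` balances the two terms.
-/

open Finset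

theorem Seminorm.exists_norm_le_mul {E : Type*} [NormedAddCommGroup E] [NormedSpace ℝ E]
    [FiniteDimensional ℝ E] (p : Seminorm ℝ E) (hp : ∀ x, p x = 0 → x = 0) :
    ∃ C, 0 < C ∧ ∀ x, ‖x‖ ≤ C * p x := by
  have hpos : ∀ x ∈ Metric.sphere (0 : E) 1, 0 < p x := fun x hx =>
    (apply_nonneg p x).lt_of_ne' fun h => by simp [hp x h] at hx
  obtain ⟨M, hM⟩ := (isCompact_sphere (0 : E) 1).exists_bound_of_continuousOn
    (f := fun x => (p x)⁻¹)
    (p.convexOn.locallyLipschitz.continuous.continuousOn.inv₀ fun x hx => (hpos x hx).ne')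
  refine ⟨max M 1, by positivity, fun x => ?_⟩
  rcases eq_or_ne x 0 with rfl | hx
  · simp
  have hx' : 0 < ‖x‖ := norm_pos_iff.2 hx
  have hu : ‖x‖⁻¹ • x ∈ Metric.sphere (0 : E) 1 := by simp [norm_smul, hx'.ne']
  have hpx : 0 < p x := by simpa [map_smul_eq_mul, hx'] using hpos _ hu
  have key : (p x)⁻¹ * ‖x‖ ≤ M := by
    simpa [map_smul_eq_mul, abs_of_pos hpx, hx'] using hM _ hu
  calc ‖x‖ = (p x)⁻¹ * ‖x‖ * p x := by field_simp
    _ ≤ max M 1 * p x := by gcongr; exact key.trans (le_max_left _ _)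

section DualNorm

variable {n : ℕ} (p : Seminorm ℝ (Fin n → ℝ)) (g : Fin n → ℝ)

theorem bddAbove_dualNorm_set (hp : ∀ x, p x = 0 → x = 0) :
    BddAbove ((fun x => ∑ i, g i * x i) '' {x | p x ≤ 1}) := by
  obtain ⟨C, hC0, hC⟩ := p.exists_norm_le_mul hp
  refine ((isCompact_closedBall (0 : Fin n → ℝ) C).image (by fun_prop)).bddAbove.mono
    (Set.image_mono fun x (hx : p x ≤ 1) => ?_)
  simpa using (hC x).trans (mul_le_of_le_one_right hC0.le hx)

theorem dualNorm_nonneg (hp : ∀ x, p x = 0 → x = 0) : 0 ≤ dualNorm p g :=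
  le_csSup (bddAbove_dualNorm_set p g hp) ⟨0, by simp, by simp⟩

theorem sum_mul_le_dualNorm_mul (hp : ∀ x, p x = 0 → x = 0) (v : Fin n → ℝ) :
    ∑ i, g i * v i ≤ dualNorm p g * p v := by
  rcases (apply_nonneg p v).eq_or_lt' with hv | hv
  · simp [hp v hv]
  have hmem : ∑ i, g i * ((p v)⁻¹ • v) i ∈ (fun x => ∑ i, g i * x i) '' {x | p x ≤ 1} :=
    ⟨_, by simp [map_smul_eq_mul, abs_of_pos hv, hv.ne'], rfl⟩
  have hle := le_csSup (bddAbove_dualNorm_set p g hp) hmem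
  simp only [Pi.smul_apply, smul_eq_mul, mul_left_comm _ (p v)⁻¹, ← mul_sum] at hle
  calc ∑ i, g i * v i = p v * ((p v)⁻¹ * ∑ i, g i * v i) := by field_simp
    _ ≤ dualNorm p g * p v := by rw [mul_comm _ (p v)]; gcongr; exact hle

end DualNorm

theorem sub_le_sum_mul_of_subgradient {n : ℕ} {f : (Fin n → ℝ) → ℝ} {x θ g : Fin n → ℝ}
    (h : f x + ∑ i, g i * (θ i - x i) ≤ f θ) : f x - f θ ≤ ∑ i, g i * (x i - θ i) := by
  have : ∑ i, g i * (θ i - x i) = -∑ i, g i * (x i - θ i) := by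
    rw [← sum_neg_distrib]; exact sum_congr rfl fun i _ => by ring
  linarith

theorem sum_sub_nonpos_of_subgradient {n T : ℕ} {f : ℕ → (Fin n → ℝ) → ℝ}
    {θs gs : ℕ → Fin n → ℝ} {θ : Fin n → ℝ}
    (hsubgrad : ∀ t < T, f t (θs t) + ∑ i, gs t i * (θ i - θs t i) ≤ f t θ)
    (hflat : ∀ t < T, ∑ i, gs t i * (θs t i - θ i) ≤ 0) :
    ∑ t ∈ range T, (f t (θs t) - f t θ) ≤ 0 :=
  sum_nonpos fun t ht => (sub_le_sum_mul_of_subgradient (hsubgrad t (mem_range.1 ht))).trans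
    (hflat t (mem_range.1 ht))

theorem sum_sub_mul_of_eq_sub_smul {n : ℕ} {a b g : Fin n → ℝ} {η : ℝ} (h : b = a - η • g)
    (w : Fin n → ℝ) : ∑ i, (a i - b i) * w i = η * ∑ i, g i * w i := by
  simp [h, mul_sum, mul_assoc]

theorem IsMinOn.sum_mul_sub_nonneg {n : ℕ} {Θ : Set (Fin n → ℝ)} {F : (Fin n → ℝ) → ℝ}
    {a z θ : Fin n → ℝ} (hmin : IsMinOn F Θ z) (hΘ : Convex ℝ Θ) (hz : z ∈ Θ) (hθ : θ ∈ Θ)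
    (hF : HasFDerivAt F (∑ i, a i • (ContinuousLinearMap.proj i : (Fin n → ℝ) →L[ℝ] ℝ)) z) :
    0 ≤ ∑ i, a i * (θ i - z i) := by
  simpa using hmin.localize.hasFDerivWithinAt_nonneg hF.hasFDerivWithinAt
    (sub_mem_posTangentConeAt_of_segment_subset (hΘ.segment_subset hz hθ))

section Bregman

variable {n : ℕ} {Ψ : (Fin n → ℝ) → ℝ} {gradΨ : (Fin n → ℝ) → (Fin n → ℝ)}

variable (Ψ gradΨ) in
theorem bregman_self (a : Fin n → ℝ) : bregman Ψ gradΨ a a = 0 := by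
  simp [bregman]

variable (Ψ gradΨ) in
theorem bregman_three_point (c x y : Fin n → ℝ) :
    bregman Ψ gradΨ c x - bregman Ψ gradΨ c y + bregman Ψ gradΨ x y
      = ∑ i, (gradΨ x i - gradΨ y i) * (x i - c i) := by
  have key : ∑ i, gradΨ y i * (c i - y i) = ∑ i, (gradΨ x i * (c i - x i)
      + gradΨ y i * (x i - y i) + (gradΨ x i - gradΨ y i) * (x i - c i)) :=
    sum_congr rfl fun i _ => by ring
  rw [sum_add_distrib, sum_add_distrib] at key
  simp only [bregman]
  linarith

theorem hasFDerivAt_bregman_left {z : Fin n → ℝ}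
    (hΨ : HasFDerivAt Ψ (∑ i, gradΨ z i • (ContinuousLinearMap.proj i : (Fin n → ℝ) →L[ℝ] ℝ)) z)
    (b : Fin n → ℝ) :
    HasFDerivAt (fun y => bregman Ψ gradΨ y b)
      (∑ i, (gradΨ z i - gradΨ b i) • (ContinuousLinearMap.proj i : (Fin n → ℝ) →L[ℝ] ℝ)) z := by
  have hlin : HasFDerivAt (fun y : Fin n → ℝ => ∑ i, gradΨ b i * (y i - b i))
      (∑ i, gradΨ b i • (ContinuousLinearMap.proj i : (Fin n → ℝ) →L[ℝ] ℝ)) z :=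
    HasFDerivAt.fun_sum fun i _ => ((hasFDerivAt_apply i z).sub_const (b i)).const_mul _
  have h := (hΨ.sub_const (Ψ b)).sub hlin
  simp_rw [← sum_sub_distrib, ← sub_smul] at h
  exact h

theorem bregman_add_bregman_le_of_isMinOn {Θ : Set (Fin n → ℝ)} (hΘ : Convex ℝ Θ)
    {y z θ : Fin n → ℝ}
    (hΨ : HasFDerivAt Ψ (∑ i, gradΨ z i • (ContinuousLinearMap.proj i : (Fin n → ℝ) →L[ℝ] ℝ)) z)
    (hz : z ∈ Θ) (hmin : IsMinOn (fun w => bregman Ψ gradΨ w y) Θ z) (hθ : θ ∈ Θ) :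
    bregman Ψ gradΨ θ z + bregman Ψ gradΨ z y ≤ bregman Ψ gradΨ θ y := by
  have hopt := hmin.sum_mul_sub_nonneg hΘ hz hθ (hasFDerivAt_bregman_left hΨ y)
  have hflip : ∑ i, (gradΨ z i - gradΨ y i) * (z i - θ i)
      = -∑ i, (gradΨ z i - gradΨ y i) * (θ i - z i) := by
    rw [← sum_neg_distrib]; exact sum_congr rfl fun i _ => by ring
  linarith [bregman_three_point Ψ gradΨ θ z y]

theorem bregman_le_sub_of_isMinOn {Θ : Set (Fin n → ℝ)} (hΘ : Convex ℝ Θ) {z x : Fin n → ℝ}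
    (hΨ : HasFDerivAt Ψ (∑ i, gradΨ z i • (ContinuousLinearMap.proj i : (Fin n → ℝ) →L[ℝ] ℝ)) z)
    (hz : z ∈ Θ) (hmin : IsMinOn Ψ Θ z) (hx : x ∈ Θ) :
    bregman Ψ gradΨ x z ≤ Ψ x - Ψ z := by
  have := hmin.sum_mul_sub_nonneg hΘ hz hx hΨ
  unfold bregman
  linarith

theorem IsMinOn.eq_of_apply_le {Θ : Set (Fin n → ℝ)} {N : (Fin n → ℝ) → ℝ}
    (hN : ∀ v, N v = 0 → v = 0) (hstrong : ∀ a b, N (a - b) ^ 2 / 2 ≤ bregman Ψ gradΨ a b)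
    {z x : Fin n → ℝ} (hmin : IsMinOn Ψ Θ z) (hΘ : Convex ℝ Θ)
    (hΨ : HasFDerivAt Ψ (∑ i, gradΨ z i • (ContinuousLinearMap.proj i : (Fin n → ℝ) →L[ℝ] ℝ)) z)
    (hz : z ∈ Θ) (hx : x ∈ Θ) (hle : Ψ x ≤ Ψ z) : x = z := by
  have h := (hstrong x z).trans (bregman_le_sub_of_isMinOn hΘ hΨ hz hmin hx)
  have hsq : N (x - z) ^ 2 = 0 := le_antisymm (by linarith) (sq_nonneg _)
  exact sub_eq_zero.1 (hN _ (pow_eq_zero_iff two_ne_zero |>.1 hsq))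

theorem bregman_le_of_grad_eq_sub_smul (p : Seminorm ℝ (Fin n → ℝ))
    (hstrong : ∀ a b, p (a - b) ^ 2 / 2 ≤ bregman Ψ gradΨ a b)
    {x y g : Fin n → ℝ} {η G : ℝ} (hη : 0 ≤ η) (hg : ∀ v, ∑ i, g i * v i ≤ G * p v)
    (hy : gradΨ y = gradΨ x - η • g) :
    bregman Ψ gradΨ x y ≤ (η * G) ^ 2 / 2 := by
  have hid := bregman_three_point Ψ gradΨ y x y
  rw [bregman_self Ψ gradΨ, sum_sub_mul_of_eq_sub_smul hy] at hid
  have hgv := mul_le_mul_of_nonneg_left (hg (x - y)) hη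
  have hxy := hstrong y x
  rw [map_sub_rev] at hxy
  simp only [Pi.sub_apply] at hgv
  nlinarith [sq_nonneg (p (x - y) - η * G)]

theorem mirror_step_le {Θ : Set (Fin n → ℝ)} (hΘ : Convex ℝ Θ) (p : Seminorm ℝ (Fin n → ℝ))
    (hstrong : ∀ a b, p (a - b) ^ 2 / 2 ≤ bregman Ψ gradΨ a b)
    {x y z g θ : Fin n → ℝ} {η G : ℝ}
    (hΨ : HasFDerivAt Ψ (∑ i, gradΨ z i • (ContinuousLinearMap.proj i : (Fin n → ℝ) →L[ℝ] ℝ)) z)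
    (hη : 0 ≤ η) (hg : ∀ v, ∑ i, g i * v i ≤ G * p v) (hy : gradΨ y = gradΨ x - η • g)
    (hz : z ∈ Θ) (hmin : IsMinOn (fun w => bregman Ψ gradΨ w y) Θ z) (hθ : θ ∈ Θ) :
    η * ∑ i, g i * (x i - θ i)
      ≤ bregman Ψ gradΨ θ x - bregman Ψ gradΨ θ z + (η * G) ^ 2 / 2 := by
  have hid := bregman_three_point Ψ gradΨ θ x y
  rw [sum_sub_mul_of_eq_sub_smul hy] at hid
  linarith [bregman_add_bregman_le_of_isMinOn hΘ hΨ hz hmin hθ,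
    (hstrong z y).trans' (by positivity),
    bregman_le_of_grad_eq_sub_smul p hstrong hη hg hy]

theorem mirror_descent_regret_le {Θ : Set (Fin n → ℝ)} (hΘ : Convex ℝ Θ)
    (p : Seminorm ℝ (Fin n → ℝ)) (hstrong : ∀ a b, p (a - b) ^ 2 / 2 ≤ bregman Ψ gradΨ a b)
    (hΨ : ∀ z, HasFDerivAt Ψ
      (∑ i, gradΨ z i • (ContinuousLinearMap.proj i : (Fin n → ℝ) →L[ℝ] ℝ)) z)
    {f : ℕ → (Fin n → ℝ) → ℝ} {θs θtil gs : ℕ → Fin n → ℝ} {T : ℕ} {η G : ℝ}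
    {θ : Fin n → ℝ} (hθ : θ ∈ Θ) (hη : 0 ≤ η)
    (hsubgrad : ∀ t < T, f t (θs t) + ∑ i, gs t i * (θ i - θs t i) ≤ f t θ)
    (hg : ∀ t < T, ∀ v, ∑ i, gs t i * v i ≤ G * p v)
    (hmirror : ∀ t < T, gradΨ (θtil (t + 1)) = gradΨ (θs t) - η • gs t)
    (hproj : ∀ t < T, θs (t + 1) ∈ Θ ∧
      IsMinOn (fun w => bregman Ψ gradΨ w (θtil (t + 1))) Θ (θs (t + 1))) :
    η * ∑ t ∈ range T, (f t (θs t) - f t θ)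
      ≤ bregman Ψ gradΨ θ (θs 0) + T * ((η * G) ^ 2 / 2) := by
  have hstep : ∀ t ∈ range T, η * (f t (θs t) - f t θ) ≤
      bregman Ψ gradΨ θ (θs t) - bregman Ψ gradΨ θ (θs (t + 1)) + (η * G) ^ 2 / 2 := by
    intro t ht
    have ht := mem_range.1 ht
    exact (mul_le_mul_of_nonneg_left (sub_le_sum_mul_of_subgradient (hsubgrad t ht)) hη).trans
      (mirror_step_le hΘ p hstrong (hΨ _) hη (hg t ht) (hmirror t ht) (hproj t ht).1
        (hproj t ht).2 hθ)
  calc η * ∑ t ∈ range T, (f t (θs t) - f t θ)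
      = ∑ t ∈ range T, η * (f t (θs t) - f t θ) := mul_sum _ _ _
    _ ≤ ∑ t ∈ range T, (bregman Ψ gradΨ θ (θs t) - bregman Ψ gradΨ θ (θs (t + 1))
          + (η * G) ^ 2 / 2) := sum_le_sum hstep
    _ = bregman Ψ gradΨ θ (θs 0) - bregman Ψ gradΨ θ (θs T) + T * ((η * G) ^ 2 / 2) := by
      rw [sum_add_distrib, sum_range_sub', sum_const, card_range, nsmul_eq_mul]
    _ ≤ _ := by linarith [(hstrong θ (θs T)).trans' (by positivity)]

end Bregman

theorem one_div_mul_le_of_mul_le_add {T B G η S : ℝ} (hT : 0 < T) (hB : 0 < B) (hG : 0 < G)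
    (hη : η = √(B / (T * G ^ 2))) (hS : η * S ≤ B + T * ((η * G) ^ 2 / 2)) :
    1 / T * S ≤ 2 * G * √(B / T) := by
  set s := √(B / T)
  have hs : 0 < s := Real.sqrt_pos.2 (by positivity)
  have hB : B = T * s ^ 2 := by rw [Real.sq_sqrt (by positivity)]; field_simp
  have hηG : η * G = s := by
    rw [hη, ← div_div, Real.sqrt_div' _ (sq_nonneg G), Real.sqrt_sq hG.le,
      div_mul_cancel₀ _ hG.ne']
  have hηS : η * S ≤ 3 / 2 * T * s ^ 2 := by rw [hB, hηG] at hS; linarith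
  have hsS : s * S ≤ s * (3 / 2 * T * s * G) :=
    calc s * S = G * (η * S) := by rw [← hηG]; ring
      _ ≤ G * (3 / 2 * T * s ^ 2) := by gcongr
      _ = s * (3 / 2 * T * s * G) := by ring
  calc 1 / T * S ≤ 1 / T * (3 / 2 * T * s * G) := by gcongr; exact le_of_mul_le_mul_left hsS hs
    _ = 3 / 2 * G * s := by field_simp
    _ ≤ 2 * G * s := by gcongr; norm_num

theorem mirror_descent_general
    {n : ℕ} (Θ : Set (Fin n → ℝ)) (hΘconv : Convex ℝ Θ)
    (f : ℕ → (Fin n → ℝ) → ℝ)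
    -- `N` is a norm on `ℝ^n`
    (N : (Fin n → ℝ) → ℝ)
    (hNtri : ∀ x y, N (x + y) ≤ N x + N y)
    (hNsmul : ∀ (c : ℝ) x, N (c • x) = |c| * N x)
    (hNdef : ∀ x, N x = 0 → x = 0)
    -- `Ψ` is nonnegative and differentiable, with gradient `gradΨ`
    (Ψ : (Fin n → ℝ) → ℝ) (gradΨ : (Fin n → ℝ) → (Fin n → ℝ))
    (hΨnonneg : ∀ x, 0 ≤ Ψ x)
    (hΨdiff : ∀ x, HasFDerivAt Ψ
      (∑ i, gradΨ x i • (ContinuousLinearMap.proj i : (Fin n → ℝ) →L[ℝ] ℝ)) x)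
    -- `Ψ` is `1`-strongly convex w.r.t. `N`
    (hstrong : ∀ x y, Ψ x + (∑ i, gradΨ x i * (y i - x i)) + (1 / 2) * (N (y - x)) ^ 2 ≤ Ψ y)
    (BΨ Bg : ℝ) (hBΨ : ∀ x ∈ Θ, Ψ x ≤ BΨ)
    (T : ℕ) (hT : 0 < T)
    (η : ℝ) (hη : η = Real.sqrt (BΨ / (T * Bg ^ 2)))
    (θs θtil : ℕ → Fin n → ℝ) (gs : ℕ → Fin n → ℝ)
    -- `θ^(1)` minimizes `Ψ` over `Θ`
    (hinit : θs 0 ∈ Θ ∧ ∀ y ∈ Θ, Ψ (θs 0) ≤ Ψ y)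
    -- `ǧ_t` is a subgradient of `f_t` at `θ^(t)`
    (hsubgrad : ∀ t < T, ∀ y ∈ Θ, f t (θs t) + ∑ i, gs t i * (y i - θs t i) ≤ f t y)
    -- dual-norm bound on the subgradients
    (hgb : ∀ t < T, dualNorm N (gs t) ≤ Bg)
    -- the mirror step: `∇Ψ(θ̃^(t+1)) = ∇Ψ(θ^(t)) − η ǧ_t`
    (hmirror : ∀ t < T, gradΨ (θtil (t + 1)) = gradΨ (θs t) - η • gs t)
    -- the Bregman projection step
    (hproj : ∀ t < T, θs (t + 1) ∈ Θ ∧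
      ∀ y ∈ Θ, bregman Ψ gradΨ (θs (t + 1)) (θtil (t + 1))
        ≤ bregman Ψ gradΨ y (θtil (t + 1))) :
    ∀ θ' ∈ Θ,
      (1 / (T : ℝ)) * ∑ t ∈ Finset.range T, f t (θs t)
        - (1 / (T : ℝ)) * ∑ t ∈ Finset.range T, f t θ'
      ≤ 2 * Bg * Real.sqrt (BΨ / T) := by
  intro θ hθ
  let p : Seminorm ℝ (Fin n → ℝ) := .of N hNtri fun c x => by rw [hNsmul, Real.norm_eq_abs]
  have hstrong' : ∀ a b, N (a - b) ^ 2 / 2 ≤ bregman Ψ gradΨ a b := fun a b => by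
    unfold bregman; linarith [hstrong b a]
  have hg : ∀ t < T, ∀ v, ∑ i, gs t i * v i ≤ Bg * p v := fun t ht v =>
    (sum_mul_le_dualNorm_mul p _ hNdef v).trans (by gcongr; exact hgb t ht)
  have hBg : 0 ≤ Bg := (dualNorm_nonneg p (gs 0) hNdef).trans (hgb 0 hT)
  have hmin : IsMinOn Ψ Θ (θs 0) := isMinOn_iff.2 hinit.2
  rw [← mul_sub, ← sum_sub_distrib]
  by_cases hdeg : Bg = 0 ∨ BΨ = 0
  · -- Then `η = 0` (as `√(x / 0) = 0`), so the regret bound is void; instead every subgradient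
    -- term vanishes, since `Θ = {θs 0}` when `BΨ = 0`.
    have hflat : ∀ t < T, ∑ i, gs t i * (θs t i - θ i) ≤ 0 := fun t ht => by
      refine (hg t ht (θs t - θ)).trans_eq ?_
      obtain hBg0 | hBΨ0 := hdeg
      · rw [hBg0, zero_mul]
      have hΘ : ∀ x ∈ Θ, x = θs 0 := fun x hx => hmin.eq_of_apply_le hNdef hstrong' hΘconv
        (hΨdiff _) hinit.1 hx (by linarith [hBΨ x hx, hΨnonneg (θs 0)])
      have hθt : θs t ∈ Θ := by rcases t with _ | t; exacts [hinit.1, (hproj t (by omega)).1]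
      rw [hΘ _ hθt, hΘ θ hθ, sub_self, map_zero, mul_zero]
    exact (mul_nonpos_of_nonneg_of_nonpos (by positivity) (sum_sub_nonpos_of_subgradient
      (fun t ht => hsubgrad t ht θ hθ) hflat)).trans (mul_nonneg (by linarith) (by positivity))
  obtain ⟨hBg_ne, hBΨ_ne⟩ := not_or.1 hdeg
  have hregret := mirror_descent_regret_le hΘconv p hstrong' hΨdiff hθ (by rw [hη]; positivity)
    (fun t ht => hsubgrad t ht θ hθ) hg hmirror
    fun t ht => ⟨(hproj t ht).1, isMinOn_iff.2 (hproj t ht).2⟩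
  have hstart := bregman_le_sub_of_isMinOn hΘconv (hΨdiff _) hinit.1 hmin hθ
  exact one_div_mul_le_of_mul_le_add (by exact_mod_cast hT)
    (((hΨnonneg θ).trans (hBΨ θ hθ)).lt_of_ne' hBΨ_ne) (hBg.lt_of_ne' hBg_ne) hη
    (by linarith [hΨnonneg (θs 0), hBΨ θ hθ])

/-- **Mirror descent** (Theorem C.6).  Let `Θ` be compact convex,
`f₁, …, f_T` convex on `Θ`, and let `Ψ` be nonnegative, differentiable and
`1`-strongly convex w.r.t. a norm `N`, with `B_Ψ ≥ max_Θ Ψ`.  Starting from the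
minimizer of `Ψ` over `Θ` and performing `T` mirror-descent steps with step
size `η = √(B_Ψ / (T B_ǧ²))`, where the subgradients have dual norm at most
`B_ǧ`, the average regret satisfies
`(1/T) ∑ₜ fₜ(θ^(t)) − (1/T) ∑ₜ fₜ(θ*) ≤ 2 B_ǧ √(B_Ψ / T)`. -/
theorem mirror_descent
    {n : ℕ} (Θ : Set (Fin n → ℝ)) (hΘcomp : IsCompact Θ) (hΘconv : Convex ℝ Θ)
    (f : ℕ → (Fin n → ℝ) → ℝ) (hf : ∀ t, ConvexOn ℝ Θ (f t))
    -- `N` is a norm on `ℝ^n`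
    (N : (Fin n → ℝ) → ℝ)
    (hNtri : ∀ x y, N (x + y) ≤ N x + N y)
    (hNsmul : ∀ (c : ℝ) x, N (c • x) = |c| * N x)
    (hNdef : ∀ x, N x = 0 → x = 0)
    -- `Ψ` is nonnegative and differentiable, with gradient `gradΨ`
    (Ψ : (Fin n → ℝ) → ℝ) (gradΨ : (Fin n → ℝ) → (Fin n → ℝ))
    (hΨnonneg : ∀ x, 0 ≤ Ψ x)
    (hΨdiff : ∀ x, HasFDerivAt Ψ
      (∑ i, gradΨ x i • (ContinuousLinearMap.proj i : (Fin n → ℝ) →L[ℝ] ℝ)) x)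
    -- `Ψ` is `1`-strongly convex w.r.t. `N`
    (hstrong : ∀ x y, Ψ x + (∑ i, gradΨ x i * (y i - x i)) + (1 / 2) * (N (y - x)) ^ 2 ≤ Ψ y)
    (BΨ Bg : ℝ) (hBΨ : ∀ x ∈ Θ, Ψ x ≤ BΨ)
    (T : ℕ) (hT : 0 < T)
    (η : ℝ) (hη : η = Real.sqrt (BΨ / (T * Bg ^ 2)))
    (θs θtil : ℕ → Fin n → ℝ) (gs : ℕ → Fin n → ℝ)
    -- `θ^(1)` minimizes `Ψ` over `Θ`
    (hinit : θs 0 ∈ Θ ∧ ∀ y ∈ Θ, Ψ (θs 0) ≤ Ψ y)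
    -- `ǧ_t` is a subgradient of `f_t` at `θ^(t)`
    (hsubgrad : ∀ t < T, ∀ y ∈ Θ, f t (θs t) + ∑ i, gs t i * (y i - θs t i) ≤ f t y)
    -- dual-norm bound on the subgradients
    (hgb : ∀ t < T, dualNorm N (gs t) ≤ Bg)
    -- the mirror step: `∇Ψ(θ̃^(t+1)) = ∇Ψ(θ^(t)) − η ǧ_t`
    (hmirror : ∀ t < T, gradΨ (θtil (t + 1)) = gradΨ (θs t) - η • gs t)
    -- the Bregman projection step
    (hproj : ∀ t < T, θs (t + 1) ∈ Θ ∧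
      ∀ y ∈ Θ, bregman Ψ gradΨ (θs (t + 1)) (θtil (t + 1))
        ≤ bregman Ψ gradΨ y (θtil (t + 1))) :
    ∀ θ' ∈ Θ,
      (1 / (T : ℝ)) * ∑ t ∈ Finset.range T, f t (θs t)
        - (1 / (T : ℝ)) * ∑ t ∈ Finset.range T, f t θ'
      ≤ 2 * Bg * Real.sqrt (BΨ / T) :=
  mirror_descent_general Θ hΘconv f N hNtri hNsmul hNdef Ψ gradΨ hΨnonneg hΨdiff hstrong BΨ Bg hBΨ T
    hT η hη θs θtil gs hinit hsubgrad hgb hmirror hproj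
end
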